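/- arXiv:1803.06817 — 6 statements merged into one kernel-verified Lean document; each statement's English description precedes it below -/
import Mathlib

section
/- Let G and H be groups and let L be an admissible list of pairs in G × H that is moreover primitive (L is not the concatenation of j ≥ 2 copies of any list). Then the centralizer in G ∗ H of the alternating element c(L) is exactly the cyclic subgroup {c(L)^n : n ∈ ℤ} generated by c(L). (This is the group-theoretic analogue of the paper's Lemma 3.4 and the precise form of the centralizer claim C_{[g₁h₁⋯g_kh_k]} = {(g₁h₁⋯g_kh_k)^n : n ∈ ℤ} in Example 5.1.) -/
open Monoid
open scoped Monoid.Coprod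

/-- The alternating element `inl g₁ * inr h₁ * ⋯ * inl g_k * inr h_k` of the free
product `G ∗ H` associated to a list of pairs `L = [(g₁,h₁),…,(g_k,h_k)]`. -/
def altElem {G H : Type*} [Group G] [Group H] (L : List (G × H)) : G ∗ H :=
  (L.map fun p => (Coprod.inl p.1 : G ∗ H) * Coprod.inr p.2).prod

/-- A list of pairs is admissible if it is nonempty and all its entries are
nontrivial in both coordinates. -/
def Admissible {G H : Type*} [Group G] [Group H] (L : List (G × H)) : Prop :=
  L ≠ [] ∧ ∀ p ∈ L, p.1 ≠ 1 ∧ p.2 ≠ 1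

/-- The `k`-th power of a list: the concatenation of `k` copies of `v`. -/
def listPow {β : Type*} (v : List β) : ℕ → List β
  | 0 => []
  | n + 1 => v ++ listPow v n

/-- A nonempty list `v` is primitive if `v = t ^ j` implies `j = 1`. -/
def PrimitiveList {β : Type*} (v : List β) : Prop :=
  v ≠ [] ∧ ∀ (t : List β) (j : ℕ), v = listPow t j → j = 1

namespace AltAux

theorem listPow_length {β : Type*} (v : List β) : ∀ n, (listPow v n).length = n * v.length
  | 0 => by simp [listPow]
  | n + 1 => by
    simp [listPow, listPow_length v n, Nat.succ_mul, Nat.add_comm]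

theorem listPow_one {β : Type*} (v : List β) : listPow v 1 = v := by
  simp [listPow]

theorem listPow_add {β : Type*} (v : List β) (p q : ℕ) :
    listPow v (p + q) = listPow v p ++ listPow v q := by
  induction p with
  | zero => simp [listPow]
  | succ p ih => simp [listPow, Nat.succ_add, ih]

theorem listPow_comm {β : Type*} (v : List β) (p : ℕ) :
    v ++ listPow v p = listPow v p ++ v := by
  have h1 : listPow v (1 + p) = listPow v (p + 1) := by rw [Nat.add_comm]
  rw [listPow_add, listPow_add, listPow_one] at h1
  exact h1

theorem listPow_map {α β : Type*} (f : α → β) (v : List α) (n : ℕ) :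
    (listPow v n).map f = listPow (v.map f) n := by
  induction n with
  | zero => rfl
  | succ n ih => simp [listPow, ih]

theorem getLast?_listPow {β : Type*} (v : List β) (hv : v ≠ []) :
    ∀ n, n ≠ 0 → (listPow v n).getLast? = v.getLast?
  | 0, h => absurd rfl h
  | 1, _ => by simp [listPow]
  | n + 2, _ => by
    have ih := getLast?_listPow v hv (n + 1) (Nat.succ_ne_zero n)
    have hne : listPow v (n + 1) ≠ [] := by
      intro h
      have := congrArg List.length h
      rw [listPow_length] at this
      simp only [List.length_nil] at this
      rcases Nat.mul_eq_zero.1 this with h' | h'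
      · exact Nat.succ_ne_zero n h'
      · exact hv (List.length_eq_zero_iff.1 h')
    rw [show listPow v (n + 2) = v ++ listPow v (n + 1) from rfl,
      List.getLast?_append_of_ne_nil _ hne, ih]

/-- Commuting lists in a free monoid have a common root. -/
theorem comm_root {β : Type*} : ∀ (n : ℕ) (l₁ l₂ : List β), l₂.length ≤ n →
    l₁.length ≤ l₂.length → l₁ ++ l₂ = l₂ ++ l₁ →
    ∃ t p q, l₁ = listPow t p ∧ l₂ = listPow t q := by
  intro n
  induction n with
  | zero =>
    intro l₁ l₂ h2 h1 _
    have : l₂ = [] := List.length_eq_zero_iff.1 (Nat.le_zero.1 h2)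
    have h1' : l₁ = [] := List.length_eq_zero_iff.1 (by omega)
    exact ⟨[], 0, 0, by simp [h1', this, listPow]⟩
  | succ n ih =>
    intro l₁ l₂ h2 h1 hcomm
    rcases eq_or_ne l₁ [] with rfl | h1ne
    · exact ⟨l₂, 0, 1, rfl, (listPow_one l₂).symm⟩
    -- l₁ is a prefix of l₂
    have hpre : l₁ <+: l₂ := by
      apply List.prefix_of_prefix_length_le (l₃ := l₂ ++ l₁)
      · rw [← hcomm]; exact ⟨l₂, rfl⟩
      · exact ⟨l₁, rfl⟩
      · exact h1
    obtain ⟨r, hr⟩ := hpre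
    subst hr
    have hcomm' : l₁ ++ r = r ++ l₁ := by
      have : l₁ ++ (l₁ ++ r) = l₁ ++ (r ++ l₁) := by
        simpa [List.append_assoc] using hcomm
      exact List.append_cancel_left this
    have h1len : 1 ≤ l₁.length := by
      rcases l₁ with _ | _
      · exact absurd rfl h1ne
      · simp
    have hlen : (l₁ ++ r).length = l₁.length + r.length := List.length_append
    rcases eq_or_ne r [] with rfl | hrne
    · exact ⟨l₁, 1, 1, (listPow_one l₁).symm, by simp [listPow_one]⟩
    have hrlen : 1 ≤ r.length := by
      rcases r with _ | _
      · exact absurd rfl hrne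
      · simp
    rcases le_or_gt l₁.length r.length with hle | hlt
    · obtain ⟨t, p, q, ht1, ht2⟩ := ih l₁ r (by omega) hle hcomm'
      exact ⟨t, p, p + q, ht1, by rw [listPow_add, ← ht1, ← ht2]⟩
    · obtain ⟨t, p, q, ht1, ht2⟩ := ih r l₁ (by omega) (le_of_lt hlt) hcomm'.symm
      exact ⟨t, q, q + p, ht2, by rw [listPow_add, ← ht1, ← ht2]⟩



theorem comm_root' {β : Type*} (l₁ l₂ : List β) (h : l₁ ++ l₂ = l₂ ++ l₁) :
    ∃ t p q, l₁ = listPow t p ∧ l₂ = listPow t q := by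
  rcases le_or_gt l₁.length l₂.length with hle | hlt
  · exact comm_root l₂.length l₁ l₂ le_rfl hle h
  · obtain ⟨t, p, q, h1, h2⟩ := comm_root l₁.length l₂ l₁ le_rfl (le_of_lt hlt) h.symm
    exact ⟨t, q, p, h2, h1⟩

universe u v

def Fac (G : Type u) (H : Type v) : Bool → Type (max u v)
  | false => ULift G
  | true => ULift H

variable {G : Type u} {H : Type v} [Group G] [Group H]

instance : (b : Bool) → Group (Fac G H b)
  | false => inferInstanceAs (Group (ULift G))
  | true => inferInstanceAs (Group (ULift H))

/-- encode a list of pairs as a list of letters -/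
def letterize (L : List (G × H)) : List (Σ b, Fac G H b) :=
  L.flatMap fun p => [⟨false, ULift.up p.1⟩, ⟨true, ULift.up p.2⟩]

theorem letterize_nil : letterize ([] : List (G × H)) = [] := rfl

theorem letterize_cons (p : G × H) (L : List (G × H)) :
    letterize (p :: L) = ⟨false, ULift.up p.1⟩ :: ⟨true, ULift.up p.2⟩ :: letterize L := rfl

theorem letterize_append (L₁ L₂ : List (G × H)) :
    letterize (L₁ ++ L₂) = letterize L₁ ++ letterize L₂ := by
  simp [letterize]

theorem letterize_listPow (T : List (G × H)) (n : ℕ) :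
    letterize (listPow T n) = listPow (letterize T) n := by
  induction n with
  | zero => rfl
  | succ n ih => rw [listPow, listPow, letterize_append, ih]

theorem letterize_injective : Function.Injective (letterize (G := G) (H := H)) := by
  intro L₁ L₂ h
  induction L₁ generalizing L₂ with
  | nil =>
    cases L₂ with
    | nil => rfl
    | cons q L₂ => simp [letterize_nil, letterize_cons] at h
  | cons p L₁ ih =>
    cases L₂ with
    | nil => simp [letterize_nil, letterize_cons] at h
    | cons q L₂ =>
      rw [letterize_cons, letterize_cons] at h
      simp only [List.cons.injEq] at h
      obtain ⟨h1, h2, h3⟩ := h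
      have e1 : (ULift.up p.1 : ULift G) = ULift.up q.1 := by
        have := (Sigma.mk.inj_iff.1 h1).2
        exact eq_of_heq this
      have e2 : (ULift.up p.2 : ULift H) = ULift.up q.2 := by
        have := (Sigma.mk.inj_iff.1 h2).2
        exact eq_of_heq this
      have hpq : p = q := Prod.ext (congrArg ULift.down e1) (congrArg ULift.down e2)
      rw [hpq, ih h3]

theorem letterize_chain' (L : List (G × H)) :
    (letterize L).Chain' fun l l' => l.1 ≠ l'.1 := by
  induction L with
  | nil => exact List.isChain_nil
  | cons p L ih =>
    rw [letterize_cons]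
    refine List.IsChain.cons (List.IsChain.cons ih ?_) (by simp)
    intro x hx
    cases L with
    | nil => simp [letterize_nil] at hx
    | cons q L => rw [letterize_cons] at hx; simp at hx; simp [← hx]

theorem letterize_ne_nil {L : List (G × H)} (h : L ≠ []) : letterize L ≠ [] := by
  cases L with
  | nil => exact absurd rfl h
  | cons p L => rw [letterize_cons]; simp

theorem letterize_head? {L : List (G × H)} (h : L ≠ []) :
    (letterize L).head?.map Sigma.fst = some false := by
  cases L with
  | nil => exact absurd rfl h
  | cons p L => rw [letterize_cons]; rfl

theorem letterize_getLast? {L : List (G × H)} (h : L ≠ []) :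
    (letterize L).getLast?.map Sigma.fst = some true := by
  induction L with
  | nil => exact absurd rfl h
  | cons p L ih =>
    rw [letterize_cons]
    cases hL : L with
    | nil => simp [letterize_nil]
    | cons q L' =>
      have hne : letterize (q :: L') ≠ [] := letterize_ne_nil (by simp)
      rw [show (⟨false, ULift.up p.1⟩ :: ⟨true, ULift.up p.2⟩ :: letterize (q :: L') :
          List (Σ b, Fac G H b)) =
          [⟨false, ULift.up p.1⟩, ⟨true, ULift.up p.2⟩] ++ letterize (q :: L') from rfl,
          List.getLast?_append_of_ne_nil _ hne]
      have h4 := ih (by simp [hL])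
      rw [hL] at h4
      exact h4

/-- decoding: an alternating letter list starting at `false` and ending at `true`
comes from a list of pairs -/
theorem decode : ∀ (s : List (Σ b, Fac G H b)), s ≠ [] →
    (s.Chain' fun l l' => l.1 ≠ l'.1) →
    s.head?.map Sigma.fst = some false →
    s.getLast?.map Sigma.fst = some true →
    ∃ T : List (G × H), s = letterize T
  | [], h, _, _, _ => absurd rfl h
  | [a], _, _, hh, hl => by
    simp at hh hl
    rw [hh] at hl
    exact absurd hl (by simp)
  | a :: b :: s', _, hc, hh, hl => by
    obtain ⟨ia, xa⟩ := a
    obtain ⟨ib, xb⟩ := b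
    have hia : ia = false := by simpa using hh
    subst hia
    have hib : ib = true := by
      have h1 := (List.isChain_cons_cons.1 hc).1
      cases ib
      · exact absurd rfl h1
      · rfl
    subst hib
    have hc' : s'.Chain' fun l l' => l.1 ≠ l'.1 :=
      (List.isChain_cons.1 (List.isChain_cons_cons.1 hc).2).2
    cases hs' : s' with
    | nil =>
      subst hs'
      refine ⟨[(xa.down, xb.down)], ?_⟩
      simp only [letterize_cons, letterize_nil]
      rfl
    | cons c s'' =>
      have hs'ne : s' ≠ [] := by simp [hs']
      have hh' : s'.head?.map Sigma.fst = some false := by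
        have h2 := (List.isChain_cons.1 (List.isChain_cons_cons.1 hc).2).1
        rw [hs'] at h2 ⊢
        have h3 := h2 c (by simp)
        simp only [ne_eq] at h3
        obtain ⟨ic, xc⟩ := c
        cases ic
        · rfl
        · exact absurd rfl h3
      have hl' : s'.getLast?.map Sigma.fst = some true := by
        rw [show (⟨false, xa⟩ :: ⟨true, xb⟩ :: s' : List (Σ b, Fac G H b)) =
          [⟨false, xa⟩, ⟨true, xb⟩] ++ s' from rfl,
          List.getLast?_append_of_ne_nil _ hs'ne] at hl
        exact hl
      obtain ⟨T', hT'⟩ := decode s' hs'ne hc' hh' hl'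
      refine ⟨(xa.down, xb.down) :: T', ?_⟩
      rw [letterize_cons, ← hT', hs']
      rfl

/-- reverse-inverse of a letter list (the word of the inverse element) -/
def revInv (s : List (Σ b, Fac G H b)) : List (Σ b, Fac G H b) :=
  (s.map fun l => ⟨l.1, l.2⁻¹⟩).reverse

theorem revInv_append (s t : List (Σ b, Fac G H b)) :
    revInv (s ++ t) = revInv t ++ revInv s := by simp [revInv]

theorem revInv_revInv (s : List (Σ b, Fac G H b)) : revInv (revInv s) = s := by
  simp [revInv, List.map_reverse, List.map_map]
  have : ((fun l : (Σ b, Fac G H b) => (⟨l.1, l.2⁻¹⟩ : Σ b, Fac G H b)) ∘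
      fun l : (Σ b, Fac G H b) => (⟨l.1, l.2⁻¹⟩ : Σ b, Fac G H b)) = id := by
    funext l; simp
  rw [this, List.map_id]

theorem revInv_listPow (t : List (Σ b, Fac G H b)) (p : ℕ) :
    revInv (listPow t p) = listPow (revInv t) p := by
  induction p with
  | zero => rfl
  | succ p ih =>
    rw [listPow, revInv_append, ih, listPow]
    exact (listPow_comm _ _).symm

theorem revInv_chain' {s : List (Σ b, Fac G H b)}
    (h : s.Chain' fun l l' => l.1 ≠ l'.1) :
    (revInv s).Chain' fun l l' => l.1 ≠ l'.1 := by
  unfold List.Chain' at h ⊢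
  rw [revInv, List.isChain_reverse]
  rw [List.isChain_map]
  exact h.imp fun a b hab => Ne.symm hab

theorem revInv_head? (s : List (Σ b, Fac G H b)) :
    (revInv s).head?.map Sigma.fst = s.getLast?.map Sigma.fst := by
  rw [revInv, List.head?_reverse, List.getLast?_map]
  cases s.getLast? <;> simp

theorem revInv_getLast? (s : List (Σ b, Fac G H b)) :
    (revInv s).getLast?.map Sigma.fst = s.head?.map Sigma.fst := by
  rw [revInv, List.getLast?_reverse, List.head?_map]
  cases s.head? <;> simp

theorem revInv_ne_one {s : List (Σ b, Fac G H b)} (h : ∀ l ∈ s, l.2 ≠ 1) :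
    ∀ l ∈ revInv s, l.2 ≠ 1 := by
  intro l hl
  rw [revInv, List.mem_reverse, List.mem_map] at hl
  obtain ⟨a, ha, rfl⟩ := hl
  simpa using h a ha


section Words

open Monoid.CoprodI

attribute [local instance] Classical.propDecidable

/-- the product of a list of letters in `CoprodI` -/
def prodList (s : List (Σ b, Fac G H b)) : CoprodI (Fac G H) :=
  (s.map fun l => CoprodI.of l.2).prod

theorem prodList_append (s t : List (Σ b, Fac G H b)) :
    prodList (s ++ t) = prodList s * prodList t := by
  simp [prodList]

theorem prodList_listPow (s : List (Σ b, Fac G H b)) (n : ℕ) :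
    prodList (listPow s n) = prodList s ^ n := by
  induction n with
  | zero => simp [listPow, prodList, pow_succ]
  | succ n ih => rw [listPow, prodList_append, ih, pow_succ']

theorem prodList_revInv (s : List (Σ b, Fac G H b)) :
    prodList (revInv s) = (prodList s)⁻¹ := by
  induction s with
  | nil => simp [revInv, prodList]
  | cons a s ih =>
    rw [show a :: s = [a] ++ s from rfl, revInv_append, prodList_append, prodList_append, ih]
    simp [revInv, prodList]

theorem word_prod_eq_prodList (w : Word (Fac G H)) : w.prod = prodList w.toList := rfl

theorem word_prod_injective :
    Function.Injective (Word.prod : Word (Fac G H) → CoprodI (Fac G H)) := by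
  intro w₁ w₂ h
  have h1 : Word.equiv (Word.prod w₁) = Word.equiv (Word.prod w₂) := congrArg _ h
  rwa [show ∀ w : Word (Fac G H), Word.equiv (Word.prod w) = w from
    fun w => Word.equiv.apply_symm_apply w, show ∀ w : Word (Fac G H),
    Word.equiv (Word.prod w) = w from fun w => Word.equiv.apply_symm_apply w] at h1

theorem equiv_prod (w : Word (Fac G H)) : Word.equiv (Word.prod w) = w :=
  Word.equiv.apply_symm_apply w

theorem prod_equiv (x : CoprodI (Fac G H)) : Word.prod (Word.equiv x) = x :=
  Word.equiv.symm_apply_apply x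

/-- normal form length -/
noncomputable def wlen (x : CoprodI (Fac G H)) : ℕ := (Word.equiv x).toList.length

theorem rcons_length_le {i : Bool} (p : Word.Pair (Fac G H) i) :
    (Word.rcons p).toList.length ≤ p.tail.toList.length + 1 := by
  rw [Word.rcons]
  split
  · omega
  · simp [Word.cons]

theorem rcons_length_ge {i : Bool} (p : Word.Pair (Fac G H) i) :
    p.tail.toList.length ≤ (Word.rcons p).toList.length := by
  rw [Word.rcons]
  split
  · omega
  · simp [Word.cons]

theorem equivPair_tail_length_le {i : Bool} (w : Word (Fac G H)) :
    (Word.equivPair i w).tail.toList.length ≤ w.toList.length := by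
  have h : Word.rcons (Word.equivPair i w) = w := by
    rw [← Word.equivPair_symm]
    exact (Word.equivPair i).symm_apply_apply w
  calc (Word.equivPair i w).tail.toList.length
      ≤ (Word.rcons (Word.equivPair i w)).toList.length := rcons_length_ge _
    _ = w.toList.length := by rw [h]

theorem smul_length_le {i : Bool} (m : Fac G H i) (w : Word (Fac G H)) :
    (CoprodI.of m • w).toList.length ≤ w.toList.length + 1 := by
  rw [Word.of_smul_def]
  exact le_trans (rcons_length_le _) (Nat.add_le_add_right (equivPair_tail_length_le w) 1)

theorem equiv_mul (x : CoprodI (Fac G H)) (v : Word (Fac G H)) :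
    Word.equiv (x * Word.prod v) = x • v := by
  show (x * Word.prod v) • Word.empty = x • v
  rw [mul_smul]
  have : Word.prod v • (Word.empty : Word (Fac G H)) = v := by
    have := equiv_prod (G := G) (H := H) v
    exact this
  rw [this]

theorem wlen_mul_le_aux : ∀ (u v : Word (Fac G H)),
    (Word.equiv (Word.prod u * Word.prod v)).toList.length ≤
      u.toList.length + v.toList.length := by
  intro u
  induction u using Word.consRecOn with
  | empty =>
    intro v
    simp only [Word.prod_empty, one_mul]
    rw [equiv_prod]
    simp [Word.empty]
  | cons i m w h1 h2 ih =>
    intro v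
    rw [Word.prod_cons, mul_assoc, ← prod_equiv (Word.prod w * Word.prod v), equiv_mul]
    refine le_trans (smul_length_le _ _) ?_
    have h3 := ih v
    simp only [Word.cons]
    simp only [List.length_cons]
    omega

theorem wlen_mul_le (x y : CoprodI (Fac G H)) : wlen (x * y) ≤ wlen x + wlen y := by
  have := wlen_mul_le_aux (Word.equiv x) (Word.equiv y)
  rwa [prod_equiv, prod_equiv] at this

theorem wlen_of_le {i : Bool} (m : Fac G H i) : wlen (CoprodI.of m) ≤ 1 := by
  have : Word.equiv (CoprodI.of m) = CoprodI.of m • (Word.empty : Word (Fac G H)) := rfl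
  rw [wlen, this]
  have := smul_length_le (G := G) (H := H) m Word.empty
  simpa [Word.empty] using this

theorem prodList_cons (a : Σ b, Fac G H b) (u : List (Σ b, Fac G H b)) :
    prodList (a :: u) = CoprodI.of a.2 * prodList u := by simp [prodList]

theorem prodList_nil : prodList ([] : List (Σ b, Fac G H b)) = 1 := rfl

theorem lists_eq {u₁ u₂ : List (Σ b, Fac G H b)}
    (h11 : ∀ l ∈ u₁, l.2 ≠ 1) (h12 : u₁.Chain' fun l l' => l.1 ≠ l'.1)
    (h21 : ∀ l ∈ u₂, l.2 ≠ 1) (h22 : u₂.Chain' fun l l' => l.1 ≠ l'.1)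
    (h : prodList u₁ = prodList u₂) : u₁ = u₂ :=
  congrArg Word.toList
    (word_prod_injective (a₁ := ⟨u₁, h11, h12⟩) (a₂ := ⟨u₂, h21, h22⟩) h)

theorem wlen_prodList {u : List (Σ b, Fac G H b)}
    (h1 : ∀ l ∈ u, l.2 ≠ 1) (h2 : u.Chain' fun l l' => l.1 ≠ l'.1) :
    wlen (prodList u) = u.length := by
  have h3 : prodList u = Word.prod ⟨u, h1, h2⟩ := rfl
  rw [wlen, h3, equiv_prod]

theorem letterize_ne_one {L : List (G × H)} (hadm : ∀ p ∈ L, p.1 ≠ 1 ∧ p.2 ≠ 1) :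
    ∀ l ∈ letterize L, l.2 ≠ 1 := by
  induction L with
  | nil => simp [letterize_nil]
  | cons p L ih =>
    rw [letterize_cons]
    intro l hl
    simp only [List.mem_cons] at hl
    rcases hl with rfl | rfl | hl
    · intro h
      exact (hadm p (List.mem_cons_self)).1 (congrArg ULift.down h)
    · intro h
      exact (hadm p (List.mem_cons_self)).2 (congrArg ULift.down h)
    · exact ih (fun q hq => hadm q (List.mem_cons_of_mem _ hq)) l hl

theorem chain'_append_of {u₁ u₂ : List (Σ b, Fac G H b)}
    (h1 : u₁.Chain' fun l l' => l.1 ≠ l'.1) (h2 : u₂.Chain' fun l l' => l.1 ≠ l'.1)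
    {b b' : Bool} (hl : u₁.getLast?.map Sigma.fst = some b)
    (hh : u₂.head?.map Sigma.fst = some b') (hbb : b ≠ b') :
    (u₁ ++ u₂).Chain' fun l l' => l.1 ≠ l'.1 := by
  refine h1.append h2 ?_
  intro x hx z hz
  rw [Option.mem_def] at hx hz
  have hx1 : x.1 = b := by
    rw [hx] at hl; exact Option.some_injective _ hl
  have hz1 : z.1 = b' := by
    rw [hz] at hh; exact Option.some_injective _ hh
  rw [hx1, hz1]; exact hbb

theorem letterize_eq_of_listPow {L : List (G × H)} (hne : L ≠ []) (hprim : PrimitiveList L)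
    {t : List (Σ b, Fac G H b)} {p : ℕ} (h : letterize L = listPow t p) :
    letterize L = t := by
  have hp : p ≠ 0 := by
    rintro rfl
    exact letterize_ne_nil hne (by simpa [listPow] using h)
  have htne : t ≠ [] := by
    rintro rfl
    apply letterize_ne_nil hne
    have h2 := congrArg List.length h
    rw [listPow_length] at h2
    simp only [List.length_nil, mul_zero] at h2
    exact List.length_eq_zero_iff.1 h2
  obtain ⟨p', rfl⟩ : ∃ p', p = p' + 1 := ⟨p - 1, by omega⟩
  have hexp : letterize L = t ++ listPow t p' := h
  have hchain : t.Chain' fun l l' => l.1 ≠ l'.1 :=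
    (hexp ▸ letterize_chain' L).left_of_append
  have hhead : t.head?.map Sigma.fst = some false := by
    have h1 := letterize_head? hne
    rw [hexp] at h1
    cases t with
    | nil => exact absurd rfl htne
    | cons a t' => simpa using h1
  have hlast : t.getLast?.map Sigma.fst = some true := by
    have h1 := letterize_getLast? hne
    rw [h, getLast?_listPow t htne _ hp] at h1
    exact h1
  obtain ⟨T, rfl⟩ := decode t htne hchain hhead hlast
  rw [← letterize_listPow] at h
  have hp1 : p' + 1 = 1 := hprim.2 T (p' + 1) (letterize_injective h)
  have hp0 : p' = 0 := by omega
  subst hp0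
  simpa [listPow] using hexp

/-- Core combinatorial lemma: in the free product `CoprodI (Fac G H)`, anything
commuting with the alternating element of an admissible primitive list is a power of it. -/
theorem core {L : List (G × H)} (hadm : Admissible L) (hprim : PrimitiveList L)
    {y : CoprodI (Fac G H)} (hy : y * prodList (letterize L) = prodList (letterize L) * y) :
    ∃ n : ℤ, y = prodList (letterize L) ^ n := by
  have hLne := hadm.1
  set ℓ := letterize L with hℓdef
  have hℓne : ℓ ≠ [] := letterize_ne_nil hLne
  have hℓ1 : ∀ l ∈ ℓ, l.2 ≠ 1 := letterize_ne_one hadm.2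
  have hℓc : ℓ.Chain' fun l l' => l.1 ≠ l'.1 := letterize_chain' L
  have hℓh : ℓ.head?.map Sigma.fst = some false := letterize_head? hLne
  have hℓl : ℓ.getLast?.map Sigma.fst = some true := letterize_getLast? hLne
  have hℓlen : 1 ≤ ℓ.length := by
    cases hcc : ℓ with
    | nil => exact absurd hcc hℓne
    | cons a u => simp
  set w := Word.equiv y with hw
  have hy_eq : y = prodList w.toList := by rw [hw, ← word_prod_eq_prodList, prod_equiv]
  by_cases hsnil : w.toList = []
  · exact ⟨0, by rw [hy_eq, hsnil, prodList_nil, zpow_zero]⟩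
  set s := w.toList with hsdef
  have hs1 : ∀ l ∈ s, l.2 ≠ 1 := w.ne_one
  have hsc : s.Chain' fun l l' => l.1 ≠ l'.1 := w.chain_ne
  have hslen : 1 ≤ s.length := by
    cases hcc : s with
    | nil => exact absurd hcc hsnil
    | cons a u => simp
  have hsh : s.head?.map Sigma.fst = some (s.head hsnil).1 := by
    rw [List.head?_eq_head hsnil]; rfl
  have hsl : s.getLast?.map Sigma.fst = some (s.getLast hsnil).1 := by
    rw [List.getLast?_eq_getLast hsnil]; rfl
  cases hi : (s.head hsnil).1 <;> cases hj : (s.getLast hsnil).1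
  · -- (false, false) : contradiction via lengths
    exfalso
    rw [hi] at hsh; rw [hj] at hsl
    -- c * y is reduced
    have hjunc : (ℓ ++ s).Chain' fun l l' => l.1 ≠ l'.1 :=
      chain'_append_of hℓc hsc hℓl hsh (by simp)
    have hone : ∀ l ∈ ℓ ++ s, l.2 ≠ 1 := by
      intro l hl; rcases List.mem_append.1 hl with h | h
      exacts [hℓ1 l h, hs1 l h]
    have hlen1 : wlen (prodList ℓ * y) = ℓ.length + s.length := by
      rw [hy_eq, ← prodList_append, wlen_prodList hone hjunc, List.length_append]
    -- y * c is short
    rcases hA : s.getLast hsnil with ⟨ja, a2⟩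
    have hja : ja = false := by rw [hA] at hj; exact hj
    subst hja
    rcases hB : ℓ.head hℓne with ⟨jb, b2⟩
    have hjb : jb = false := by
      have := List.head?_eq_head hℓne
      rw [this, hB] at hℓh
      simpa using hℓh
    subst hjb
    have hssplit : s.dropLast ++ [(⟨false, a2⟩ : Σ b, Fac G H b)] = s := by
      rw [← hA]; exact List.dropLast_append_getLast hsnil
    have hℓsplit : (⟨false, b2⟩ : Σ b, Fac G H b) :: ℓ.tail = ℓ := by
      rw [← hB]; exact List.cons_head_tail hℓne
    have hyy : y = prodList s.dropLast * CoprodI.of a2 := by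
      rw [hy_eq]
      conv_lhs => rw [← hssplit]
      rw [prodList_append, prodList_cons, prodList_nil, mul_one]
    have hcc : prodList ℓ = CoprodI.of b2 * prodList ℓ.tail := by
      conv_lhs => rw [← hℓsplit]
      rw [prodList_cons]
    have hkey : y * prodList ℓ =
        prodList s.dropLast * CoprodI.of (a2 * b2) * prodList ℓ.tail := by
      rw [hyy, hcc, map_mul]
      group
    have hb1 : wlen (prodList s.dropLast) = s.dropLast.length := by
      refine wlen_prodList (fun l hl => hs1 l (List.dropLast_subset s hl)) ?_
      rw [← hssplit] at hsc
      exact hsc.left_of_append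
    have hb2 : wlen (prodList ℓ.tail) = ℓ.tail.length := by
      refine wlen_prodList (fun l hl => hℓ1 l (List.mem_of_mem_tail hl)) hℓc.tail
    have hbound : wlen (y * prodList ℓ) ≤ s.dropLast.length + 1 + ℓ.tail.length := by
      rw [hkey]
      refine le_trans (wlen_mul_le _ _) ?_
      have h5 := wlen_mul_le (prodList s.dropLast) (CoprodI.of (a2 * b2))
      have h6 := wlen_of_le (a2 * b2)
      omega
    rw [hy] at hbound
    rw [hlen1] at hbound
    rw [List.length_dropLast, List.length_tail] at hbound
    omega
  · -- (false, true) : main case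
    rw [hi] at hsh; rw [hj] at hsl
    have hjunc1 : (s ++ ℓ).Chain' fun l l' => l.1 ≠ l'.1 :=
      chain'_append_of hsc hℓc hsl hℓh (by simp)
    have hjunc2 : (ℓ ++ s).Chain' fun l l' => l.1 ≠ l'.1 :=
      chain'_append_of hℓc hsc hℓl hsh (by simp)
    have hone1 : ∀ l ∈ s ++ ℓ, l.2 ≠ 1 := by
      intro l hl; rcases List.mem_append.1 hl with h | h
      exacts [hs1 l h, hℓ1 l h]
    have hone2 : ∀ l ∈ ℓ ++ s, l.2 ≠ 1 := by
      intro l hl; rcases List.mem_append.1 hl with h | h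
      exacts [hℓ1 l h, hs1 l h]
    have hlist : s ++ ℓ = ℓ ++ s := by
      refine lists_eq hone1 hjunc1 hone2 hjunc2 ?_
      rw [prodList_append, prodList_append, ← hy_eq, hy]
    obtain ⟨t, p, q, hℓt, hst⟩ := comm_root' ℓ s hlist.symm
    have hℓeq : ℓ = t := letterize_eq_of_listPow hLne hprim hℓt
    refine ⟨(q : ℤ), ?_⟩
    rw [hy_eq, hst, ← hℓeq, prodList_listPow, zpow_natCast]
  · -- (true, false) : main case with c⁻¹
    rw [hi] at hsh; rw [hj] at hsl
    set ℓ' := revInv ℓ with hℓ'def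
    have hℓ'1 : ∀ l ∈ ℓ', l.2 ≠ 1 := revInv_ne_one hℓ1
    have hℓ'c : ℓ'.Chain' fun l l' => l.1 ≠ l'.1 := revInv_chain' hℓc
    have hℓ'h : ℓ'.head?.map Sigma.fst = some true := by
      rw [hℓ'def, revInv_head?]; exact hℓl
    have hℓ'l : ℓ'.getLast?.map Sigma.fst = some false := by
      rw [hℓ'def, revInv_getLast?]; exact hℓh
    have hy' : y * prodList ℓ' = prodList ℓ' * y := by
      have hcomm : Commute y (prodList ℓ) := hy
      have := hcomm.inv_right
      rw [hℓ'def, prodList_revInv]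
      exact this
    have hjunc1 : (s ++ ℓ').Chain' fun l l' => l.1 ≠ l'.1 :=
      chain'_append_of hsc hℓ'c hsl hℓ'h (by simp)
    have hjunc2 : (ℓ' ++ s).Chain' fun l l' => l.1 ≠ l'.1 :=
      chain'_append_of hℓ'c hsc hℓ'l hsh (by simp)
    have hone1 : ∀ l ∈ s ++ ℓ', l.2 ≠ 1 := by
      intro l hl; rcases List.mem_append.1 hl with h | h
      exacts [hs1 l h, hℓ'1 l h]
    have hone2 : ∀ l ∈ ℓ' ++ s, l.2 ≠ 1 := by
      intro l hl; rcases List.mem_append.1 hl with h | h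
      exacts [hℓ'1 l h, hs1 l h]
    have hlist : s ++ ℓ' = ℓ' ++ s := by
      refine lists_eq hone1 hjunc1 hone2 hjunc2 ?_
      rw [prodList_append, prodList_append, ← hy_eq, hy']
    obtain ⟨t, p, q, hℓt, hst⟩ := comm_root' ℓ' s hlist.symm
    have hrev : ℓ = listPow (revInv t) p := by
      have h7 : revInv ℓ' = ℓ := by rw [hℓ'def, revInv_revInv]
      rw [← h7, hℓt, revInv_listPow]
    have hℓeq : ℓ = revInv t := letterize_eq_of_listPow hLne hprim hrev
    have ht' : t = ℓ' := by
      rw [hℓ'def, hℓeq, revInv_revInv]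
    refine ⟨-(q : ℤ), ?_⟩
    rw [hy_eq, hst, ht', hℓ'def, prodList_listPow, prodList_revInv,
      zpow_neg, zpow_natCast, inv_pow]
  · -- (true, true) : contradiction via lengths
    exfalso
    rw [hi] at hsh; rw [hj] at hsl
    -- y * c is reduced
    have hjunc : (s ++ ℓ).Chain' fun l l' => l.1 ≠ l'.1 :=
      chain'_append_of hsc hℓc hsl hℓh (by simp)
    have hone : ∀ l ∈ s ++ ℓ, l.2 ≠ 1 := by
      intro l hl; rcases List.mem_append.1 hl with h | h
      exacts [hs1 l h, hℓ1 l h]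
    have hlen1 : wlen (y * prodList ℓ) = s.length + ℓ.length := by
      rw [hy_eq, ← prodList_append, wlen_prodList hone hjunc, List.length_append]
    -- c * y is short
    rcases hA : s.head hsnil with ⟨ja, a2⟩
    have hja : ja = true := by rw [hA] at hi; exact hi
    subst hja
    rcases hB : ℓ.getLast hℓne with ⟨jb, b2⟩
    have hjb : jb = true := by
      have := List.getLast?_eq_getLast hℓne
      rw [this, hB] at hℓl
      simpa using hℓl
    subst hjb
    have hssplit : (⟨true, a2⟩ : Σ b, Fac G H b) :: s.tail = s := by
      rw [← hA]; exact List.cons_head_tail hsnil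
    have hℓsplit : ℓ.dropLast ++ [(⟨true, b2⟩ : Σ b, Fac G H b)] = ℓ := by
      rw [← hB]; exact List.dropLast_append_getLast hℓne
    have hyy : y = CoprodI.of a2 * prodList s.tail := by
      rw [hy_eq]
      conv_lhs => rw [← hssplit]
      rw [prodList_cons]
    have hcc : prodList ℓ = prodList ℓ.dropLast * CoprodI.of b2 := by
      conv_lhs => rw [← hℓsplit]
      rw [prodList_append, prodList_cons, prodList_nil, mul_one]
    have hkey : prodList ℓ * y =
        prodList ℓ.dropLast * CoprodI.of (b2 * a2) * prodList s.tail := by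
      rw [hyy, hcc, map_mul]
      group
    have hb1 : wlen (prodList ℓ.dropLast) = ℓ.dropLast.length := by
      refine wlen_prodList (fun l hl => hℓ1 l (List.dropLast_subset ℓ hl)) ?_
      rw [← hℓsplit] at hℓc
      exact hℓc.left_of_append
    have hb2 : wlen (prodList s.tail) = s.tail.length := by
      refine wlen_prodList (fun l hl => hs1 l (List.mem_of_mem_tail hl)) hsc.tail
    have hbound : wlen (prodList ℓ * y) ≤ ℓ.dropLast.length + 1 + s.tail.length := by
      rw [hkey]
      refine le_trans (wlen_mul_le _ _) ?_
      have h5 := wlen_mul_le (prodList ℓ.dropLast) (CoprodI.of (b2 * a2))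
      have h6 := wlen_of_le (b2 * a2)
      omega
    rw [← hy, hlen1] at hbound
    rw [List.length_dropLast, List.length_tail] at hbound
    omega

end Words


section Transfer

open Monoid.Coprod Monoid.CoprodI

/-- the canonical hom `G ∗ H →* CoprodI (Fac G H)` -/
def toI : (G ∗ H) →* CoprodI (Fac G H) :=
  Coprod.lift
    ((CoprodI.of (M := Fac G H) (i := false)).comp
      ((MulEquiv.ulift (α := G)).symm.toMonoidHom))
    ((CoprodI.of (M := Fac G H) (i := true)).comp
      ((MulEquiv.ulift (α := H)).symm.toMonoidHom))

/-- the canonical hom `CoprodI (Fac G H) →* G ∗ H` -/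
def ofI : CoprodI (Fac G H) →* G ∗ H :=
  CoprodI.lift fun b =>
    match b with
    | false => Coprod.inl.comp ((MulEquiv.ulift (α := G)).toMonoidHom)
    | true => Coprod.inr.comp ((MulEquiv.ulift (α := H)).toMonoidHom)

theorem ofI_toI (x : G ∗ H) : ofI (toI x) = x := by
  have h : (ofI.comp (toI (G := G) (H := H))) = MonoidHom.id _ := by
    apply Coprod.hom_ext
    · ext g
      simp only [toI, ofI, MonoidHom.coe_comp, Function.comp_apply, MonoidHom.id_comp,
        Coprod.lift_apply_inl, CoprodI.lift_of]
      rfl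
    · ext g
      simp only [toI, ofI, MonoidHom.coe_comp, Function.comp_apply, MonoidHom.id_comp,
        Coprod.lift_apply_inr, CoprodI.lift_of]
      rfl
  calc ofI (toI x) = (ofI.comp (toI (G := G) (H := H))) x := rfl
    _ = x := by rw [h]; rfl

theorem toI_injective : Function.Injective (toI (G := G) (H := H)) := by
  intro a b h
  have := congrArg ofI h
  rwa [ofI_toI, ofI_toI] at this

theorem toI_altElem (L : List (G × H)) : toI (altElem L) = prodList (letterize L) := by
  induction L with
  | nil => simp [altElem, letterize_nil, prodList_nil]
  | cons p L ih =>
    have h1 : altElem (p :: L) =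
        (Coprod.inl p.1 * Coprod.inr p.2) * altElem L := by
      simp [altElem]
    rw [h1, map_mul, map_mul, ih, letterize_cons, prodList_cons, prodList_cons]
    have h2 : toI (Coprod.inl p.1 : G ∗ H) = CoprodI.of (M := Fac G H) (i := false) (ULift.up p.1) := by
      simp only [toI, Coprod.lift_apply_inl, MonoidHom.coe_comp, Function.comp_apply]
      rfl
    have h3 : toI (Coprod.inr p.2 : G ∗ H) = CoprodI.of (M := Fac G H) (i := true) (ULift.up p.2) := by
      simp only [toI, Coprod.lift_apply_inr, MonoidHom.coe_comp, Function.comp_apply]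
      rfl
    rw [h2, h3, mul_assoc]

end Transfer

end AltAux

/-- The centralizer in `G ∗ H` of the alternating element of an admissible
primitive list `L` is exactly the cyclic subgroup generated by `altElem L`. -/
theorem centralizer_altElem_of_primitive {G H : Type*} [Group G] [Group H]
    (L : List (G × H)) (hL : Admissible L) (hprim : PrimitiveList L) :
    Subgroup.centralizer {altElem L} = Subgroup.zpowers (altElem L) := by
  ext x
  rw [Subgroup.mem_centralizer_iff, Subgroup.mem_zpowers_iff]
  constructor
  · intro hx
    have hcomm : altElem L * x = x * altElem L := hx _ (Set.mem_singleton _)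
    have h2 : AltAux.toI x * AltAux.prodList (AltAux.letterize L) =
        AltAux.prodList (AltAux.letterize L) * AltAux.toI x := by
      rw [← AltAux.toI_altElem, ← map_mul, ← map_mul, hcomm]
    obtain ⟨n, hn⟩ := AltAux.core hL hprim h2
    refine ⟨n, ?_⟩
    apply AltAux.toI_injective
    rw [map_zpow, AltAux.toI_altElem, ← hn]
  · rintro ⟨n, rfl⟩
    intro g hg
    rw [Set.mem_singleton_iff] at hg
    subst hg
    exact (Commute.zpow_right (Commute.refl _) n)
end

section
/- Let G and H be groups and let L be an admissible list of pairs in G × H. Then the centralizer in G ∗ H of the alternating element c(L) is infinite cyclic: there exists an element d ∈ G ∗ H of infinite order such that the centralizer of c(L) equals {d^n : n ∈ ℤ}; in particular, this centralizer is isomorphic as a group to ℤ. (This is the claim C_{[g₁h₁⋯g_kh_k]}(G ∗ H) ≅ ℤ of Example 5.1.) -/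
open Monoid
open scoped Monoid.Coprod

namespace AltCent

open scoped Classical

noncomputable section



/-- `n`-fold concatenation of a list. -/
def pw {β : Type*} (t : List β) : ℕ → List β
  | 0 => []
  | n + 1 => t ++ pw t n

variable {β : Type*}

@[simp] theorem pw_zero (t : List β) : pw t 0 = [] := rfl
@[simp] theorem pw_succ (t : List β) (n : ℕ) : pw t (n+1) = t ++ pw t n := rfl

theorem pw_add (t : List β) (m n : ℕ) : pw t (m + n) = pw t m ++ pw t n := by
  induction m with
  | zero => simp
  | succ m ih => rw [Nat.succ_add, pw_succ, pw_succ, ih, List.append_assoc]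

theorem mem_pw {t : List β} {n : ℕ} {a : β} (h : a ∈ pw t n) : a ∈ t := by
  induction n with
  | zero => simp at h
  | succ n ih => rw [pw_succ, List.mem_append] at h; exact h.elim id ih

theorem pw_ne_nil {t : List β} (ht : t ≠ []) {n : ℕ} (hn : 0 < n) : pw t n ≠ [] := by
  cases n with
  | zero => omega
  | succ n => simp [pw_succ, ht]

/-- If `L = pw s b` then `s` commutes with `L`. -/
theorem comm_of_eq_pw {s L : List β} {b : ℕ} (h : L = pw s b) : s ++ L = L ++ s := by
  subst h
  induction b with
  | zero => simp
  | succ b ih =>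
    rw [pw_succ]
    conv_lhs => rw [ih]
    rw [List.append_assoc]

theorem rootProp_self (L : List β) : 0 < L.length ∧ L.take L.length ++ L = L ++ L.take L.length ∨ L = [] := by
  rcases eq_or_ne L [] with h | h
  · exact Or.inr h
  · exact Or.inl ⟨List.length_pos_iff.2 h, by simp⟩

/-- The length of the primitive root of `L`. -/
noncomputable def rootLen (L : List β) (hL : L ≠ []) : ℕ :=
  @Nat.find (fun n => 0 < n ∧ L.take n ++ L = L ++ L.take n) (Classical.decPred _)
    ⟨L.length, List.length_pos_iff.2 hL, by simp⟩

/-- The primitive root of `L`. -/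
noncomputable def root (L : List β) (hL : L ≠ []) : List β := L.take (rootLen L hL)

theorem rootLen_spec (L : List β) (hL : L ≠ []) :
    0 < rootLen L hL ∧ L.take (rootLen L hL) ++ L = L ++ L.take (rootLen L hL) :=
  @Nat.find_spec (fun n => 0 < n ∧ L.take n ++ L = L ++ L.take n) (Classical.decPred _) _

theorem rootLen_pos (L : List β) (hL : L ≠ []) : 0 < rootLen L hL := (rootLen_spec L hL).1

theorem root_comm (L : List β) (hL : L ≠ []) : root L hL ++ L = L ++ root L hL :=
  (rootLen_spec L hL).2

theorem rootLen_le (L : List β) (hL : L ≠ []) {n : ℕ} (h1 : 0 < n)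
    (h2 : L.take n ++ L = L ++ L.take n) : rootLen L hL ≤ n :=
  @Nat.find_min' (fun n => 0 < n ∧ L.take n ++ L = L ++ L.take n) (Classical.decPred _) _ _ ⟨h1, h2⟩

theorem rootLen_le_length (L : List β) (hL : L ≠ []) : rootLen L hL ≤ L.length :=
  rootLen_le L hL (List.length_pos_iff.2 hL) (by simp)

theorem root_ne_nil (L : List β) (hL : L ≠ []) : root L hL ≠ [] := by
  have h1 := rootLen_pos L hL
  have h2 := List.length_pos_iff.2 hL
  simp only [root, ne_eq, ← List.length_eq_zero_iff, List.length_take]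
  omega

theorem mem_root (L : List β) (hL : L ≠ []) {a : β} (h : a ∈ root L hL) : a ∈ L :=
  List.take_subset _ _ h

/-- A word commuting with `L`, of length `≤ |L|`, is the corresponding prefix of `L`. -/
theorem prefix_eq (L : List β) {s : List β} (hc : s ++ L = L ++ s)
    (hlen : s.length ≤ L.length) : s = L.take s.length :=
  calc s = (s ++ L).take s.length := by simp
    _ = (L ++ s).take s.length := by rw [hc]
    _ = L.take s.length := List.take_append_of_le_length hlen

/-- Main theorem: anything commuting with `L` is a power of the root. -/
theorem eq_pw_root_of_comm (L : List β) (hL : L ≠ []) {s : List β}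
    (hc : s ++ L = L ++ s) : ∃ q, s = pw (root L hL) q := by
  generalize hn : s.length = n
  induction n using Nat.strong_induction_on generalizing s with
  | _ n ih =>
  subst hn
  rcases eq_or_ne s [] with rfl | hs
  · exact ⟨0, rfl⟩
  rcases le_or_gt s.length L.length with hle | hlt
  · -- s is a prefix of L, and root is a prefix of s
    have hsp : s = L.take s.length := prefix_eq L hc hle
    have hr : rootLen L hL ≤ s.length := by
      refine rootLen_le L hL (List.length_pos_iff.2 hs) ?_
      rw [← hsp]; exact hc
    have hroot_pref : root L hL = s.take (rootLen L hL) := by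
      conv_rhs => rw [hsp]
      rw [List.take_take, min_eq_left hr, root]
    have hsplit : s = root L hL ++ s.drop (rootLen L hL) := by
      rw [hroot_pref]; exact (List.take_append_drop _ s).symm
    have hcomm' : s.drop (rootLen L hL) ++ L = L ++ s.drop (rootLen L hL) := by
      apply List.append_cancel_left (as := root L hL)
      calc root L hL ++ (s.drop (rootLen L hL) ++ L)
          = (root L hL ++ s.drop (rootLen L hL)) ++ L := by rw [List.append_assoc]
        _ = s ++ L := by rw [← hsplit]
        _ = L ++ s := hc
        _ = L ++ (root L hL ++ s.drop (rootLen L hL)) := by rw [← hsplit]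
        _ = (L ++ root L hL) ++ s.drop (rootLen L hL) := by rw [List.append_assoc]
        _ = (root L hL ++ L) ++ s.drop (rootLen L hL) := by rw [root_comm]
        _ = root L hL ++ (L ++ s.drop (rootLen L hL)) := by rw [List.append_assoc]
    have hlen' : (s.drop (rootLen L hL)).length < s.length := by
      rw [List.length_drop]
      have := rootLen_pos L hL
      have := List.length_pos_iff.2 hs
      omega
    obtain ⟨q, hq⟩ := ih _ hlen' hcomm' rfl
    exact ⟨q + 1, by rw [pw_succ, ← hq, ← hsplit]⟩
  · -- L is a proper prefix of s
    have hLp : L = s.take L.length :=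
      calc L = (L ++ s).take L.length := by simp
        _ = (s ++ L).take L.length := by rw [hc]
        _ = s.take L.length := List.take_append_of_le_length hlt.le
    have hsplit : s = L ++ s.drop L.length := by
      conv_lhs => rw [← List.take_append_drop L.length s, ← hLp]
    have hcomm' : s.drop L.length ++ L = L ++ s.drop L.length := by
      apply List.append_cancel_left (as := L)
      calc L ++ (s.drop L.length ++ L)
          = (L ++ s.drop L.length) ++ L := by rw [List.append_assoc]
        _ = s ++ L := by rw [← hsplit]
        _ = L ++ s := hc
        _ = L ++ (L ++ s.drop L.length) := by rw [← hsplit]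
    have hlen' : (s.drop L.length).length < s.length := by
      rw [List.length_drop]
      have := List.length_pos_iff.2 hL
      omega
    obtain ⟨q1, hq1⟩ := ih _ hlt (by simp) rfl
    obtain ⟨q2, hq2⟩ := ih _ hlen' hcomm' rfl
    exact ⟨q1 + q2, by rw [pw_add, ← hq1, ← hq2, ← hsplit]⟩

theorem exists_eq_pw_root (L : List β) (hL : L ≠ []) :
    ∃ m, 0 < m ∧ L = pw (root L hL) m := by
  obtain ⟨m, hm⟩ := eq_pw_root_of_comm L hL (s := L) (by simp)
  refine ⟨m, ?_, hm⟩
  rcases Nat.eq_zero_or_pos m with rfl | h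
  · rw [pw_zero] at hm; exact absurd hm hL
  · exact h





variable {G H : Type*} [Group G] [Group H]

/-- Letters of words in the free product. -/
abbrev Letter (G H : Type*) := G ⊕ H

/-- Side of a letter. -/
def sd : Letter G H → Bool := Sum.isLeft

/-- A letter is nontrivial. -/
def okL : Letter G H → Prop := fun a => match a with
  | .inl g => g ≠ 1
  | .inr h => h ≠ 1

/-- A reduced word: all letters nontrivial, sides alternate. -/
def Red (l : List (Letter G H)) : Prop :=
  (∀ a ∈ l, okL a) ∧ l.IsChain (fun a b => sd a ≠ sd b)

theorem Red.nil : Red ([] : List (Letter G H)) := ⟨by simp, by simp⟩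

theorem Red.tail {a : Letter G H} {l : List (Letter G H)} (h : Red (a :: l)) : Red l :=
  ⟨fun x hx => h.1 x (List.mem_cons_of_mem _ hx), h.2.tail⟩

theorem Red.suffix {l₁ l : List (Letter G H)} (h : Red l) (hs : l₁ <:+ l) : Red l₁ :=
  ⟨fun x hx => h.1 x (hs.subset hx), h.2.suffix hs⟩

theorem Red.prefix {l₁ l : List (Letter G H)} (h : Red l) (hs : l₁ <+: l) : Red l₁ :=
  ⟨fun x hx => h.1 x (hs.subset hx), h.2.prefix hs⟩

/-- The letter map to the free product. -/
def toK : Letter G H → G ∗ H := Sum.elim Coprod.inl Coprod.inr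

/-- Product of a word of letters. -/
def prodW (l : List (Letter G H)) : G ∗ H := (l.map toK).prod

@[simp] theorem prodW_nil : prodW ([] : List (Letter G H)) = 1 := rfl

@[simp] theorem prodW_cons (a : Letter G H) (l : List (Letter G H)) :
    prodW (a :: l) = toK a * prodW l := by simp [prodW]

theorem prodW_append (l₁ l₂ : List (Letter G H)) :
    prodW (l₁ ++ l₂) = prodW l₁ * prodW l₂ := by simp [prodW]

/-- Left action of `G` on words. -/
def gmul (g : G) (l : List (Letter G H)) : List (Letter G H) :=
  if g = 1 then l else
  match l with
  | .inl g' :: t => if g * g' = 1 then t else .inl (g * g') :: t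
  | .inr h' :: t => .inl g :: .inr h' :: t
  | [] => [.inl g]

/-- Left action of `H` on words. -/
def hmul (h : H) (l : List (Letter G H)) : List (Letter G H) :=
  if h = 1 then l else
  match l with
  | .inr h' :: t => if h * h' = 1 then t else .inr (h * h') :: t
  | .inl g' :: t => .inr h :: .inl g' :: t
  | [] => [.inr h]

@[simp] theorem gmul_one (l : List (Letter G H)) : gmul (1 : G) l = l := by simp [gmul]
@[simp] theorem hmul_one (l : List (Letter G H)) : hmul (1 : H) l = l := by simp [hmul]

theorem gmul_nil {g : G} (hg : g ≠ 1) : gmul g ([] : List (Letter G H)) = [.inl g] := by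
  simp [gmul, hg]

theorem gmul_inl {g : G} (hg : g ≠ 1) (g' : G) (t : List (Letter G H)) :
    gmul g (.inl g' :: t) = if g * g' = 1 then t else .inl (g * g') :: t := by
  simp [gmul, hg]

theorem gmul_inr {g : G} (hg : g ≠ 1) (h' : H) (t : List (Letter G H)) :
    gmul g (.inr h' :: t) = .inl g :: .inr h' :: t := by
  simp [gmul, hg]

theorem hmul_nil {h : H} (hh : h ≠ 1) : hmul h ([] : List (Letter G H)) = [.inr h] := by
  simp [hmul, hh]

theorem hmul_inr {h : H} (hh : h ≠ 1) (h' : H) (t : List (Letter G H)) :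
    hmul h (.inr h' :: t) = if h * h' = 1 then t else .inr (h * h') :: t := by
  simp [hmul, hh]

theorem hmul_inl {h : H} (hh : h ≠ 1) (g' : G) (t : List (Letter G H)) :
    hmul h (.inl g' :: t) = .inr h :: .inl g' :: t := by
  simp [hmul, hh]

theorem Red.gmul {g : G} {l : List (Letter G H)} (h : Red l) : Red (gmul g l) := by
  rcases eq_or_ne g 1 with rfl | hg
  · simpa
  match l with
  | [] => rw [gmul_nil hg]; exact ⟨by simpa [okL] using hg, by simp⟩
  | .inl g' :: t =>
    rcases eq_or_ne (g * g') 1 with h1 | h1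
    · rw [gmul_inl hg, if_pos h1]; exact h.tail
    · rw [gmul_inl hg, if_neg h1]
      refine ⟨fun a ha => ?_, ?_⟩
      · rcases List.mem_cons.1 ha with rfl | ha
        · exact h1
        · exact h.1 a (List.mem_cons_of_mem _ ha)
      · rcases t with _ | ⟨b, t⟩
        · simp
        · obtain ⟨hrel, hch⟩ := List.isChain_cons_cons.1 h.2
          exact List.isChain_cons_cons.2 ⟨by simpa [sd] using hrel, hch⟩
  | .inr h' :: t =>
    rw [gmul_inr hg]
    refine ⟨fun a ha => ?_, ?_⟩
    · rcases List.mem_cons.1 ha with rfl | ha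
      · exact hg
      · exact h.1 a ha
    · rw [List.isChain_cons_cons]
      exact ⟨by simp [sd], h.2⟩

theorem Red.hmul {h : H} {l : List (Letter G H)} (hr : Red l) : Red (hmul h l) := by
  rcases eq_or_ne h 1 with rfl | hh
  · simpa
  match l with
  | [] => rw [hmul_nil hh]; exact ⟨by simpa [okL] using hh, by simp⟩
  | .inr h' :: t =>
    rcases eq_or_ne (h * h') 1 with h1 | h1
    · rw [hmul_inr hh, if_pos h1]; exact hr.tail
    · rw [hmul_inr hh, if_neg h1]
      refine ⟨fun a ha => ?_, ?_⟩
      · rcases List.mem_cons.1 ha with rfl | ha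
        · exact h1
        · exact hr.1 a (List.mem_cons_of_mem _ ha)
      · rcases t with _ | ⟨b, t⟩
        · simp
        · obtain ⟨hrel, hch⟩ := List.isChain_cons_cons.1 hr.2
          exact List.isChain_cons_cons.2 ⟨by simpa [sd] using hrel, hch⟩
  | .inl g' :: t =>
    rw [hmul_inl hh]
    refine ⟨fun a ha => ?_, ?_⟩
    · rcases List.mem_cons.1 ha with rfl | ha
      · exact hh
      · exact hr.1 a ha
    · rw [List.isChain_cons_cons]
      exact ⟨by simp [sd], hr.2⟩

theorem gmul_gmul (g₁ g₂ : G) {l : List (Letter G H)} (hl : Red l) :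
    gmul g₁ (gmul g₂ l) = gmul (g₁ * g₂) l := by
  rcases eq_or_ne g₂ 1 with rfl | hg₂
  · simp
  rcases eq_or_ne g₁ 1 with rfl | hg₁
  · simp
  rcases l with _ | ⟨a, t⟩
  · rcases eq_or_ne (g₁ * g₂) 1 with h12 | h12 <;> simp [gmul, hg₁, hg₂, h12]
  rcases a with g' | h'
  · have hg' : g' ≠ 1 := hl.1 _ (List.mem_cons_self)
    have ht : t = [] ∨ ∃ h' t', t = Sum.inr h' :: t' := by
      rcases t with _ | ⟨a, t'⟩
      · exact Or.inl rfl
      · rcases a with g'' | h'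
        · exact absurd rfl ((List.isChain_cons_cons.1 hl.2).1)
        · exact Or.inr ⟨h', t', rfl⟩
    rcases eq_or_ne (g₂ * g') 1 with h2 | h2
    · have e1 : gmul g₂ (Sum.inl g' :: t) = t := by simp [gmul, hg₂, h2]
      have e2 : gmul g₁ t = Sum.inl g₁ :: t := by
        rcases ht with rfl | ⟨h', t', rfl⟩ <;> simp [gmul, hg₁]
      rcases eq_or_ne (g₁ * g₂) 1 with h12 | h12
      · have hgg : g₁ = g' := by
          rw [eq_inv_of_mul_eq_one_left h12, eq_inv_of_mul_eq_one_right h2]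
        rw [e1, e2, h12, gmul_one, hgg]
      · have h3 : g₁ * g₂ * g' = g₁ := by rw [mul_assoc, h2, mul_one]
        rw [e1, e2]; simp [gmul, h12, h3, hg₁]
    · have e1 : gmul g₂ (Sum.inl g' :: t) = Sum.inl (g₂ * g') :: t := by
        simp [gmul, hg₂, h2]
      rcases eq_or_ne (g₁ * g₂) 1 with h12 | h12
      · have h3 : g₁ * (g₂ * g') = g' := by rw [← mul_assoc, h12, one_mul]
        rw [e1]; simp [gmul, hg₁, h12, h3, hg']
      · have h3 : g₁ * (g₂ * g') = g₁ * g₂ * g' := (mul_assoc _ _ _).symm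
        by_cases h4 : g₁ * g₂ * g' = 1
        · rw [e1]; simp [gmul, hg₁, h12, h3, h4]
        · rw [e1]; simp [gmul, hg₁, h12, h3, h4]
  · have e1 : gmul g₂ (Sum.inr h' :: t) = Sum.inl g₂ :: Sum.inr h' :: t := by
      simp [gmul, hg₂]
    rcases eq_or_ne (g₁ * g₂) 1 with h12 | h12 <;> simp [e1, gmul, hg₁, hg₂, h12]

theorem hmul_hmul (h₁ h₂ : H) {l : List (Letter G H)} (hl : Red l) :
    hmul h₁ (hmul h₂ l) = hmul (h₁ * h₂) l := by
  rcases eq_or_ne h₂ 1 with rfl | hh₂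
  · simp
  rcases eq_or_ne h₁ 1 with rfl | hh₁
  · simp
  rcases l with _ | ⟨a, t⟩
  · rcases eq_or_ne (h₁ * h₂) 1 with h12 | h12 <;> simp [hmul, hh₁, hh₂, h12]
  rcases a with g' | h'
  · have e1 : hmul h₂ (Sum.inl g' :: t) = Sum.inr h₂ :: Sum.inl g' :: t := by
      simp [hmul, hh₂]
    rcases eq_or_ne (h₁ * h₂) 1 with h12 | h12 <;> simp [e1, hmul, hh₁, hh₂, h12]
  · have hh' : h' ≠ 1 := hl.1 _ (List.mem_cons_self)
    have ht : t = [] ∨ ∃ g' t', t = Sum.inl g' :: t' := by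
      rcases t with _ | ⟨a, t'⟩
      · exact Or.inl rfl
      · rcases a with g'' | h''
        · exact Or.inr ⟨g'', t', rfl⟩
        · exact absurd rfl ((List.isChain_cons_cons.1 hl.2).1)
    rcases eq_or_ne (h₂ * h') 1 with h2 | h2
    · have e1 : hmul h₂ (Sum.inr h' :: t) = t := by simp [hmul, hh₂, h2]
      have e2 : hmul h₁ t = Sum.inr h₁ :: t := by
        rcases ht with rfl | ⟨g', t', rfl⟩ <;> simp [hmul, hh₁]
      rcases eq_or_ne (h₁ * h₂) 1 with h12 | h12
      · have hgg : h₁ = h' := by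
          rw [eq_inv_of_mul_eq_one_left h12, eq_inv_of_mul_eq_one_right h2]
        rw [e1, e2, h12, hmul_one, hgg]
      · have h3 : h₁ * h₂ * h' = h₁ := by rw [mul_assoc, h2, mul_one]
        rw [e1, e2]; simp [hmul, h12, h3, hh₁]
    · have e1 : hmul h₂ (Sum.inr h' :: t) = Sum.inr (h₂ * h') :: t := by
        simp [hmul, hh₂, h2]
      rcases eq_or_ne (h₁ * h₂) 1 with h12 | h12
      · have h3 : h₁ * (h₂ * h') = h' := by rw [← mul_assoc, h12, one_mul]
        rw [e1]; simp [hmul, hh₁, h12, h3, hh']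
      · have h3 : h₁ * (h₂ * h') = h₁ * h₂ * h' := (mul_assoc _ _ _).symm
        by_cases h4 : h₁ * h₂ * h' = 1
        · rw [e1]; simp [hmul, hh₁, h12, h3, h4]
        · rw [e1]; simp [hmul, hh₁, h12, h3, h4]

theorem prodW_gmul (g : G) (l : List (Letter G H)) :
    prodW (gmul g l) = Coprod.inl g * prodW l := by
  rcases eq_or_ne g 1 with rfl | hg
  · simp
  rcases l with _ | ⟨a, t⟩
  · simp [gmul, hg, toK]
  rcases a with g' | h'
  · rcases eq_or_ne (g * g') 1 with h1 | h1
    · have : (Coprod.inl g : G ∗ H) * Coprod.inl g' = 1 := by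
        rw [← map_mul, h1, map_one]
      simp [gmul, hg, h1, toK, ← mul_assoc, this]
    · simp [gmul, hg, h1, toK, ← mul_assoc, ← map_mul]
  · simp [gmul, hg, toK]

theorem prodW_hmul (h : H) (l : List (Letter G H)) :
    prodW (hmul h l) = Coprod.inr h * prodW l := by
  rcases eq_or_ne h 1 with rfl | hh
  · simp
  rcases l with _ | ⟨a, t⟩
  · simp [hmul, hh, toK]
  rcases a with g' | h'
  · simp [hmul, hh, toK]
  · rcases eq_or_ne (h * h') 1 with h1 | h1
    · have : (Coprod.inr h : G ∗ H) * Coprod.inr h' = 1 := by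
        rw [← map_mul, h1, map_one]
      simp [hmul, hh, h1, toK, ← mul_assoc, this]
    · simp [hmul, hh, h1, toK, ← mul_assoc, ← map_mul]

/-- The type of reduced words. -/
def W (G H : Type*) [Group G] [Group H] := {l : List (Letter G H) // Red l}

/-- Action of `G` on reduced words. -/
def gAct : G →* Equiv.Perm (W G H) where
  toFun g :=
    { toFun := fun w => ⟨gmul g w.1, w.2.gmul⟩
      invFun := fun w => ⟨gmul g⁻¹ w.1, w.2.gmul⟩
      left_inv := fun w => Subtype.ext (by
        show gmul g⁻¹ (gmul g w.1) = w.1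
        rw [gmul_gmul _ _ w.2, inv_mul_cancel, gmul_one])
      right_inv := fun w => Subtype.ext (by
        show gmul g (gmul g⁻¹ w.1) = w.1
        rw [gmul_gmul _ _ w.2, mul_inv_cancel, gmul_one]) }
  map_one' := Equiv.ext fun w => Subtype.ext (by
    show gmul (1 : G) w.1 = w.1
    simp)
  map_mul' g₁ g₂ := Equiv.ext fun w => Subtype.ext (by
    show gmul (g₁ * g₂) w.1 = gmul g₁ (gmul g₂ w.1)
    exact (gmul_gmul g₁ g₂ w.2).symm)

/-- Action of `H` on reduced words. -/
def hAct : H →* Equiv.Perm (W G H) where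
  toFun h :=
    { toFun := fun w => ⟨hmul h w.1, w.2.hmul⟩
      invFun := fun w => ⟨hmul h⁻¹ w.1, w.2.hmul⟩
      left_inv := fun w => Subtype.ext (by
        show hmul h⁻¹ (hmul h w.1) = w.1
        rw [hmul_hmul _ _ w.2, inv_mul_cancel, hmul_one])
      right_inv := fun w => Subtype.ext (by
        show hmul h (hmul h⁻¹ w.1) = w.1
        rw [hmul_hmul _ _ w.2, mul_inv_cancel, hmul_one]) }
  map_one' := Equiv.ext fun w => Subtype.ext (by
    show hmul (1 : H) w.1 = w.1
    simp)
  map_mul' h₁ h₂ := Equiv.ext fun w => Subtype.ext (by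
    show hmul (h₁ * h₂) w.1 = hmul h₁ (hmul h₂ w.1)
    exact (hmul_hmul h₁ h₂ w.2).symm)

/-- The canonical action of the free product on reduced words. -/
def Φ : G ∗ H →* Equiv.Perm (W G H) := Coprod.lift gAct hAct

theorem Φ_inl (g : G) : (Φ (Coprod.inl g) : Equiv.Perm (W G H)) = gAct g := by
  simp [Φ]

theorem Φ_inr (h : H) : (Φ (Coprod.inr h) : Equiv.Perm (W G H)) = hAct h := by
  simp [Φ]

/-- The empty reduced word. -/
def wEmpty : W G H := ⟨[], Red.nil⟩

/-- The normal form of an element of the free product. -/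
def nf (x : G ∗ H) : List (Letter G H) := (Φ x wEmpty).1

theorem Red.nf (x : G ∗ H) : Red (nf x) := (Φ x wEmpty).2

theorem prodW_Φ (x : G ∗ H) : ∀ w : W G H, prodW ((Φ x w).1) = x * prodW w.1 := by
  induction x using Coprod.induction_on' with
  | one => intro w; rw [map_one]; simp
  | inl_mul m x ih =>
    intro w
    rw [map_mul, Equiv.Perm.mul_apply, Φ_inl]
    show prodW (gmul m (Φ x w).1) = _
    rw [prodW_gmul, ih, mul_assoc]
  | inr_mul n x ih =>
    intro w
    rw [map_mul, Equiv.Perm.mul_apply, Φ_inr]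
    show prodW (hmul n (Φ x w).1) = _
    rw [prodW_hmul, ih, mul_assoc]

theorem prodW_nf (x : G ∗ H) : prodW (nf x) = x := by
  have := prodW_Φ x wEmpty
  simpa [nf, wEmpty] using this

theorem Φ_prodW (l : List (Letter G H)) :
    ∀ (w : W G H), Red (l ++ w.1) → (Φ (prodW l) w).1 = l ++ w.1 := by
  induction l using List.reverseRecOn with
  | nil => intro w h; rw [prodW_nil, map_one]; simp
  | append_singleton l a ih =>
    intro w h
    have hred : Red (a :: w.1) := by
      refine h.suffix ?_
      rw [List.append_assoc]
      exact ⟨l, by simp⟩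
    have key : Φ (prodW [a]) w = (⟨a :: w.1, hred⟩ : W G H) := by
      apply Subtype.ext
      rcases a with g | h'
      · have hg : g ≠ 1 := hred.1 _ (List.mem_cons_self)
        have e : prodW [Sum.inl g] = (Coprod.inl g : G ∗ H) := by
          simp [prodW, toK]
        rw [e, Φ_inl]
        show gmul g w.1 = Sum.inl g :: w.1
        rcases hw : w.1 with _ | ⟨b, t⟩
        · rw [gmul_nil hg]
        · rcases b with g'' | h''
          · exfalso
            have := (List.isChain_cons_cons.1 (by rw [hw] at hred; exact hred.2)).1
            simp [sd] at this
          · rw [gmul_inr hg]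
      · have hh : h' ≠ 1 := hred.1 _ (List.mem_cons_self)
        have e : prodW [Sum.inr h'] = (Coprod.inr h' : G ∗ H) := by
          simp [prodW, toK]
        rw [e, Φ_inr]
        show hmul h' w.1 = Sum.inr h' :: w.1
        rcases hw : w.1 with _ | ⟨b, t⟩
        · rw [hmul_nil hh]
        · rcases b with g'' | h''
          · rw [hmul_inl hh]
          · exfalso
            have := (List.isChain_cons_cons.1 (by rw [hw] at hred; exact hred.2)).1
            simp [sd] at this
    rw [prodW_append, map_mul, Equiv.Perm.mul_apply, key]
    have h2 : Red (l ++ (a :: w.1)) := by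
      rw [← List.singleton_append, ← List.append_assoc]
      exact h
    rw [ih ⟨a :: w.1, hred⟩ h2]
    simp

theorem nf_prodW {l : List (Letter G H)} (h : Red l) : nf (prodW l) = l := by
  have := Φ_prodW l wEmpty (by simpa [wEmpty] using h)
  simpa [nf, wEmpty] using this

@[simp] theorem nf_one : nf (1 : G ∗ H) = [] := by
  simp [nf, map_one, wEmpty]; rfl

theorem eq_one_of_nf_eq_nil {x : G ∗ H} (h : nf x = []) : x = 1 := by
  have := prodW_nf x
  rw [h] at this
  simpa using this.symm

/-- Inverse of a letter. -/
def invL : Letter G H → Letter G H := Sum.map (·⁻¹) (·⁻¹)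

theorem toK_invL (a : Letter G H) : toK (invL a) = (toK a)⁻¹ := by
  rcases a with g | h <;> simp [invL, toK]

theorem sd_invL (a : Letter G H) : sd (invL a) = sd a := by
  rcases a with g | h <;> simp [invL, sd]

theorem okL_invL {a : Letter G H} (h : okL a) : okL (invL a) := by
  rcases a with g | h' <;> simpa [invL, okL] using h

theorem prodW_revInv (l : List (Letter G H)) :
    prodW ((l.map invL).reverse) = (prodW l)⁻¹ := by
  induction l with
  | nil => simp
  | cons a t ih =>
    rw [List.map_cons, List.reverse_cons, prodW_append, ih, prodW_cons, prodW_cons,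
      prodW_nil, mul_one, toK_invL, mul_inv_rev]

theorem Red.revInv {l : List (Letter G H)} (h : Red l) : Red ((l.map invL).reverse) := by
  constructor
  · intro a ha
    rw [List.mem_reverse, List.mem_map] at ha
    obtain ⟨b, hb, rfl⟩ := ha
    exact okL_invL (h.1 b hb)
  · rw [List.isChain_reverse]
    rw [List.isChain_map]
    refine List.IsChain.imp ?_ h.2
    intro a b hab
    show sd (invL b) ≠ sd (invL a)
    rw [sd_invL, sd_invL]
    exact hab.symm

theorem nf_inv (x : G ∗ H) : nf x⁻¹ = ((nf x).map invL).reverse := by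
  have hx : x⁻¹ = prodW (((nf x).map invL).reverse) := by
    rw [prodW_revInv, prodW_nf]
  rw [hx, nf_prodW (Red.nf x).revInv]

theorem length_gmul (g : G) (l : List (Letter G H)) :
    (gmul g l).length ≤ l.length + 1 := by
  rcases eq_or_ne g 1 with rfl | hg
  · simp
  rcases l with _ | ⟨a, t⟩
  · simp [gmul_nil hg]
  rcases a with g' | h'
  · rw [gmul_inl hg]
    split_ifs <;> simp <;> omega
  · rw [gmul_inr hg]; simp

theorem length_hmul (h : H) (l : List (Letter G H)) :
    (hmul h l).length ≤ l.length + 1 := by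
  rcases eq_or_ne h 1 with rfl | hh
  · simp
  rcases l with _ | ⟨a, t⟩
  · simp [hmul_nil hh]
  rcases a with g' | h'
  · rw [hmul_inl hh]; simp
  · rw [hmul_inr hh]
    split_ifs <;> simp <;> omega

theorem nf_toK_mul (a : Letter G H) (y : G ∗ H) :
    (nf (toK a * y)).length ≤ (nf y).length + 1 := by
  rcases a with g | h
  · have e : nf (toK (Sum.inl g) * y) = gmul g (nf y) := by
      show (Φ (Coprod.inl g * y) wEmpty).1 = _
      rw [map_mul, Equiv.Perm.mul_apply, Φ_inl]
      rfl
    rw [e]; exact length_gmul g _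
  · have e : nf (toK (Sum.inr h) * y) = hmul h (nf y) := by
      show (Φ (Coprod.inr h * y) wEmpty).1 = _
      rw [map_mul, Equiv.Perm.mul_apply, Φ_inr]
      rfl
    rw [e]; exact length_hmul h _

theorem length_nf_prodW_mul (w : List (Letter G H)) (y : G ∗ H) :
    (nf (prodW w * y)).length ≤ w.length + (nf y).length := by
  induction w with
  | nil => simp
  | cons a t ih =>
    have e : prodW (a :: t) * y = toK a * (prodW t * y) := by
      rw [prodW_cons, mul_assoc]
    rw [e]
    calc (nf (toK a * (prodW t * y))).length ≤ (nf (prodW t * y)).length + 1 :=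
          nf_toK_mul a _
      _ ≤ t.length + (nf y).length + 1 := by omega
      _ = (a :: t).length + (nf y).length := by simp; omega

theorem length_nf_prodW_le (w : List (Letter G H)) :
    (nf (prodW w)).length ≤ w.length := by
  have := length_nf_prodW_mul w 1
  simpa using this







/-- The alternating word associated to a list of pairs. -/
def wordOf : List (G × H) → List (Letter G H)
  | [] => []
  | p :: t => Sum.inl p.1 :: Sum.inr p.2 :: wordOf t

@[simp] theorem wordOf_nil : wordOf ([] : List (G × H)) = [] := rfl
@[simp] theorem wordOf_cons (p : G × H) (t : List (G × H)) :
    wordOf (p :: t) = Sum.inl p.1 :: Sum.inr p.2 :: wordOf t := rfl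

theorem wordOf_append (L₁ L₂ : List (G × H)) :
    wordOf (L₁ ++ L₂) = wordOf L₁ ++ wordOf L₂ := by
  induction L₁ with
  | nil => simp
  | cons p t ih => simp [ih]

theorem wordOf_eq_nil_iff {L : List (G × H)} : wordOf L = [] ↔ L = [] := by
  cases L <;> simp

theorem length_wordOf (L : List (G × H)) : (wordOf L).length = 2 * L.length := by
  induction L with
  | nil => simp
  | cons p t ih => simp [ih]; omega

theorem wordOf_injective : Function.Injective (wordOf : List (G × H) → List (Letter G H)) := by
  intro L₁ L₂ h
  induction L₁ generalizing L₂ with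
  | nil => rwa [wordOf_nil, eq_comm, wordOf_eq_nil_iff, eq_comm] at h
  | cons p t ih =>
    rcases L₂ with _ | ⟨q, t₂⟩
    · rw [wordOf_cons] at h; simp at h
    · rw [wordOf_cons, wordOf_cons] at h
      simp only [List.cons.injEq, Sum.inl.injEq, Sum.inr.injEq] at h
      obtain ⟨h1, h2, h3⟩ := h
      rw [Prod.ext h1 h2, ih h3]

/-- All entries of a pair list are nontrivial. -/
def AE (L : List (G × H)) : Prop := ∀ p ∈ L, p.1 ≠ 1 ∧ p.2 ≠ 1

theorem AE.pw {t : List (G × H)} (h : AE t) (n : ℕ) : AE (pw t n) :=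
  fun p hp => h p (mem_pw hp)

theorem red_wordOf {L : List (G × H)} (h : AE L) : Red (wordOf L) := by
  induction L with
  | nil => exact Red.nil
  | cons p t ih =>
    have hp := h p (List.mem_cons_self)
    have ht : AE t := fun q hq => h q (List.mem_cons_of_mem _ hq)
    have iht := ih ht
    refine ⟨?_, ?_⟩
    · intro a ha
      rw [wordOf_cons] at ha
      rcases List.mem_cons.1 ha with rfl | ha
      · exact hp.1
      rcases List.mem_cons.1 ha with rfl | ha
      · exact hp.2
      · exact iht.1 a ha
    · rw [wordOf_cons, List.isChain_cons_cons]
      refine ⟨by simp [sd], ?_⟩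
      rcases ht' : wordOf t with _ | ⟨b, u⟩
      · simp
      · rw [List.isChain_cons_cons]
        constructor
        · rcases t with _ | ⟨q, t'⟩
          · simp at ht'
          · rw [wordOf_cons] at ht'
            injection ht' with hb _
            rw [← hb]; simp [sd]
        · rw [← ht']; exact iht.2

theorem prodW_wordOf_pw (t : List (G × H)) (n : ℕ) :
    prodW (wordOf (pw t n)) = (prodW (wordOf t)) ^ n := by
  induction n with
  | zero => simp
  | succ n ih => rw [pw_succ, wordOf_append, prodW_append, ih, pow_succ']

/-- Structure: a reduced word starting with a `G`-letter and ending with an `H`-letter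
is an alternating word. -/
theorem struct : ∀ (n : ℕ) (l : List (Letter G H)), Red l → l.length ≤ n →
    (∃ g t, l = Sum.inl g :: t) → (∃ b : H, l.getLast? = some (Sum.inr b)) →
    ∃ L', AE L' ∧ l = wordOf L' := by
  intro n
  induction n with
  | zero =>
    rintro l _ hlen ⟨g, t, rfl⟩ _
    simp at hlen
  | succ n ih =>
    rintro l hred hlen ⟨g, t, rfl⟩ ⟨b, hb⟩
    rcases t with _ | ⟨a, t₂⟩
    · simp at hb
    have ha : ∃ h : H, a = Sum.inr h := by
      have := (List.isChain_cons_cons.1 hred.2).1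
      rcases a with g' | h'
      · simp [sd] at this
      · exact ⟨h', rfl⟩
    obtain ⟨h', rfl⟩ := ha
    rcases t₂ with _ | ⟨a₂, t₃⟩
    · refine ⟨[(g, h')], ⟨?_, ?_⟩⟩
      · rintro p hp
        rcases List.mem_cons.1 hp with rfl | hp
        · exact ⟨hred.1 _ (List.mem_cons_self),
            hred.1 _ (List.mem_cons_of_mem _ (List.mem_cons_self))⟩
        · simp at hp
      · simp
    · have ha₂ : ∃ g₂ : G, a₂ = Sum.inl g₂ := by
        have := (List.isChain_cons_cons.1 (List.isChain_cons_cons.1 hred.2).2).1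
        rcases a₂ with g₂ | h₂
        · exact ⟨g₂, rfl⟩
        · simp [sd] at this
      obtain ⟨g₂, rfl⟩ := ha₂
      have hlast : (Sum.inl g₂ :: t₃ : List (Letter G H)).getLast? = some (Sum.inr b) := by
        rw [← hb]
        rfl
      obtain ⟨L₂, hL₂, hw⟩ := ih (Sum.inl g₂ :: t₃) (hred.tail.tail)
        (by simp at hlen ⊢; omega) ⟨g₂, t₃, rfl⟩ ⟨b, hlast⟩
      refine ⟨(g, h') :: L₂, ⟨?_, ?_⟩⟩
      · rintro p hp
        rcases List.mem_cons.1 hp with rfl | hp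
        · exact ⟨hred.1 _ (List.mem_cons_self),
            hred.1 _ (List.mem_cons_of_mem _ (List.mem_cons_self))⟩
        · exact hL₂ p hp
      · rw [wordOf_cons, ← hw]

theorem wordOf_getLast? {L : List (G × H)} (hL : L ≠ []) :
    ∃ b : H, (wordOf L).getLast? = some (Sum.inr b) := by
  induction L with
  | nil => exact absurd rfl hL
  | cons p t ih =>
    rcases eq_or_ne t [] with rfl | ht
    · exact ⟨p.2, rfl⟩
    · obtain ⟨b, hb⟩ := ih ht
      have hmem : Sum.inr b ∈ (wordOf t).getLast? := Option.mem_def.2 hb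
      have h2 := List.mem_getLast?_cons (y := (Sum.inr p.2 : Letter G H)) hmem
      have h3 := List.mem_getLast?_cons (y := (Sum.inl p.1 : Letter G H)) h2
      exact ⟨b, by rw [wordOf_cons]; exact Option.mem_def.1 h3⟩



@[simp] theorem toK_inl (g : G) : (toK (Sum.inl g) : G ∗ H) = Coprod.inl g := rfl
@[simp] theorem toK_inr (h : H) : (toK (Sum.inr h) : G ∗ H) = Coprod.inr h := rfl

theorem inl_inl_mul (a b : G) (y : G ∗ H) :
    (Coprod.inl a : G ∗ H) * ((Coprod.inl b : G ∗ H) * y) = (Coprod.inl (a * b) : G ∗ H) * y := by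
  rw [← mul_assoc, ← map_mul]

theorem inr_inr_mul (a b : H) (y : G ∗ H) :
    (Coprod.inr a : G ∗ H) * ((Coprod.inr b : G ∗ H) * y) = (Coprod.inr (a * b) : G ∗ H) * y := by
  rw [← mul_assoc, ← map_mul]

theorem altElem_eq_prodW (L : List (G × H)) : altElem L = prodW (wordOf L) := by
  induction L with
  | nil => simp [altElem]
  | cons p t ih =>
    simp only [altElem, List.map_cons, List.prod_cons] at ih ⊢
    rw [ih, wordOf_cons, prodW_cons, prodW_cons, toK_inl, toK_inr, mul_assoc]

section Main

variable {L : List (G × H)}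

theorem key_case1 (hL1 : L ≠ []) (hAE : AE L) (x : G ∗ H)
    (hc : x * prodW (wordOf L) = prodW (wordOf L) * x)
    {g : G} {t' : List (Letter G H)} (h1 : nf x = Sum.inl g :: t')
    {b : H} (h2 : (nf x).getLast? = some (Sum.inr b)) :
    ∃ q : ℕ, x = (prodW (wordOf (root L hL1))) ^ q := by
  have hredM : Red (wordOf L) := red_wordOf hAE
  have hredx : Red (nf x) := Red.nf x
  obtain ⟨p₀, L₂, hL0⟩ : ∃ p₀ L₂, L = p₀ :: L₂ := by
    rcases L with _ | ⟨p₀, L₂⟩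
    · exact absurd rfl hL1
    · exact ⟨_, _, rfl⟩
  obtain ⟨bM, hbM⟩ := wordOf_getLast? hL1
  have hhM : (wordOf L).head? = some (Sum.inl p₀.1) := by rw [hL0, wordOf_cons]; rfl
  have hred1 : Red (nf x ++ wordOf L) := by
    refine ⟨fun a ha => ?_, ?_⟩
    · rcases List.mem_append.1 ha with ha | ha
      · exact hredx.1 a ha
      · exact hredM.1 a ha
    · refine hredx.2.append hredM.2 ?_
      intro a' ha' y hy
      rw [Option.mem_def, h2] at ha'
      rw [Option.mem_def, hhM] at hy
      cases ha'; cases hy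
      simp [sd]
  have hred2 : Red (wordOf L ++ nf x) := by
    refine ⟨fun a ha => ?_, ?_⟩
    · rcases List.mem_append.1 ha with ha | ha
      · exact hredM.1 a ha
      · exact hredx.1 a ha
    · refine hredM.2.append hredx.2 ?_
      intro a' ha' y hy
      rw [Option.mem_def, hbM] at ha'
      rw [Option.mem_def, h1] at hy
      cases ha'; cases hy
      simp [sd]
  have e1 : nf (x * prodW (wordOf L)) = nf x ++ wordOf L := by
    conv_lhs => rw [← prodW_nf x]
    rw [← prodW_append, nf_prodW hred1]
  have e2 : nf (prodW (wordOf L) * x) = wordOf L ++ nf x := by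
    conv_lhs => rw [← prodW_nf x]
    rw [← prodW_append, nf_prodW hred2]
  have heq : nf x ++ wordOf L = wordOf L ++ nf x := by
    rw [← e1, ← e2, hc]
  obtain ⟨L', hAE', hLw⟩ := struct (nf x).length (nf x) hredx le_rfl ⟨g, t', h1⟩ ⟨b, h2⟩
  have hw : wordOf (L' ++ L) = wordOf (L ++ L') := by
    rw [wordOf_append, wordOf_append, ← hLw, heq]
  have hcomm : L' ++ L = L ++ L' := wordOf_injective hw
  obtain ⟨q, hq⟩ := eq_pw_root_of_comm L hL1 hcomm
  refine ⟨q, ?_⟩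
  rw [← prodW_nf x, hLw, hq, prodW_wordOf_pw]

theorem key_case_ll (hL1 : L ≠ []) (hAE : AE L) (x : G ∗ H)
    (hc : x * prodW (wordOf L) = prodW (wordOf L) * x)
    {g : G} {t' : List (Letter G H)} (h1 : nf x = Sum.inl g :: t')
    {a : G} (h2 : (nf x).getLast? = some (Sum.inl a)) : False := by
  have hredM : Red (wordOf L) := red_wordOf hAE
  have hredx : Red (nf x) := Red.nf x
  obtain ⟨p₀, L₂, hL0⟩ : ∃ p₀ L₂, L = p₀ :: L₂ := by
    rcases L with _ | ⟨p₀, L₂⟩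
    · exact absurd rfl hL1
    · exact ⟨_, _, rfl⟩
  obtain ⟨bM, hbM⟩ := wordOf_getLast? hL1
  -- `c * x` is reduced
  have hred2 : Red (wordOf L ++ nf x) := by
    refine ⟨fun a' ha => ?_, ?_⟩
    · rcases List.mem_append.1 ha with ha | ha
      · exact hredM.1 _ ha
      · exact hredx.1 _ ha
    · refine hredM.2.append hredx.2 ?_
      intro a' ha' y hy
      rw [Option.mem_def, hbM] at ha'
      rw [Option.mem_def, h1] at hy
      cases ha'; cases hy
      simp [sd]
  have e2 : nf (prodW (wordOf L) * x) = wordOf L ++ nf x := by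
    conv_lhs => rw [← prodW_nf x]
    rw [← prodW_append, nf_prodW hred2]
  -- `x * c` merges in the middle
  have hne : nf x ≠ [] := by rw [h1]; simp
  have hlast : (nf x).getLast hne = Sum.inl a := by
    have := List.getLast?_eq_getLast hne
    rw [h2] at this
    exact (Option.some_injective _ this).symm
  have hsplit : nf x = (nf x).dropLast ++ [Sum.inl a] := by
    conv_lhs => rw [← List.dropLast_append_getLast hne]
    rw [hlast]
  have emul : x * prodW (wordOf L) =
      prodW (((nf x).dropLast ++ [Sum.inl (a * p₀.1)]) ++ (Sum.inr p₀.2 :: wordOf L₂)) := by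
    conv_lhs => rw [← prodW_nf x, hsplit, hL0]
    simp only [wordOf_cons, prodW_append, prodW_cons, prodW_nil, toK_inl, toK_inr,
      mul_one, mul_assoc]
    rw [inl_inl_mul]
  have hlen1 : (nf (x * prodW (wordOf L))).length ≤
      (nf x).length - 1 + 1 + (1 + (wordOf L₂).length) := by
    rw [emul]
    refine le_trans (length_nf_prodW_le _) ?_
    rw [List.length_append, List.length_append]
    have : (nf x).dropLast.length = (nf x).length - 1 := by
      rw [List.length_dropLast]
    simp [this]
  have hlen2 : (nf (prodW (wordOf L) * x)).length = (wordOf L).length + (nf x).length := by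
    rw [e2, List.length_append]
  have hL2len : (wordOf L).length = 2 + (wordOf L₂).length := by
    rw [hL0, wordOf_cons]
    simp
    omega
  have hxlen : 1 ≤ (nf x).length := by rw [h1]; simp
  rw [hc, hlen2] at hlen1
  omega

theorem key_case_rr (hL1 : L ≠ []) (hAE : AE L) (x : G ∗ H)
    (hc : x * prodW (wordOf L) = prodW (wordOf L) * x)
    {h₀ : H} {t' : List (Letter G H)} (h1 : nf x = Sum.inr h₀ :: t')
    {b : H} (h2 : (nf x).getLast? = some (Sum.inr b)) : False := by
  have hredM : Red (wordOf L) := red_wordOf hAE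
  have hredx : Red (nf x) := Red.nf x
  obtain ⟨p₀, L₂, hL0⟩ : ∃ p₀ L₂, L = p₀ :: L₂ := by
    rcases L with _ | ⟨p₀, L₂⟩
    · exact absurd rfl hL1
    · exact ⟨_, _, rfl⟩
  have hhM : (wordOf L).head? = some (Sum.inl p₀.1) := by rw [hL0, wordOf_cons]; rfl
  -- `x * c` is reduced
  have hred1 : Red (nf x ++ wordOf L) := by
    refine ⟨fun a' ha => ?_, ?_⟩
    · rcases List.mem_append.1 ha with ha | ha
      · exact hredx.1 _ ha
      · exact hredM.1 _ ha
    · refine hredx.2.append hredM.2 ?_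
      intro a' ha' y hy
      rw [Option.mem_def, h2] at ha'
      rw [Option.mem_def, hhM] at hy
      cases ha'; cases hy
      simp [sd]
  have e1 : nf (x * prodW (wordOf L)) = nf x ++ wordOf L := by
    conv_lhs => rw [← prodW_nf x]
    rw [← prodW_append, nf_prodW hred1]
  -- `c * x` merges in the middle
  obtain ⟨L₀, p₁, hLc⟩ : ∃ L₀ p₁, L = L₀ ++ [p₁] := by
    rcases List.eq_nil_or_concat L with h | ⟨L₀, p₁, h⟩
    · exact absurd h hL1
    · exact ⟨L₀, p₁, by rw [h, List.concat_eq_append]⟩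
  have emul : prodW (wordOf L) * x =
      prodW (((wordOf L₀ ++ [Sum.inl p₁.1]) ++ [Sum.inr (p₁.2 * h₀)]) ++ t') := by
    conv_lhs => rw [← prodW_nf x, h1, hLc]
    simp only [wordOf_append, wordOf_cons, wordOf_nil, prodW_append, prodW_cons, prodW_nil,
      toK_inl, toK_inr, mul_one, mul_assoc, List.append_nil]
    rw [inr_inr_mul]
  have hlen1 : (nf (prodW (wordOf L) * x)).length ≤
      ((wordOf L₀).length + 1) + 1 + t'.length := by
    rw [emul]
    refine le_trans (length_nf_prodW_le _) ?_
    simp [List.length_append]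
    omega
  have hlen2 : (nf (x * prodW (wordOf L))).length = (nf x).length + (wordOf L).length := by
    rw [e1, List.length_append]
  have hMlen : (wordOf L).length = (wordOf L₀).length + 2 := by
    rw [hLc, wordOf_append, wordOf_cons, wordOf_nil]
    simp
  have hxlen : (nf x).length = t'.length + 1 := by rw [h1]; simp
  rw [← hc, hlen2] at hlen1
  omega

theorem comm_imp_zpow (hL1 : L ≠ []) (hAE : AE L) (x : G ∗ H)
    (hc : x * prodW (wordOf L) = prodW (wordOf L) * x) :
    ∃ n : ℤ, x = (prodW (wordOf (root L hL1))) ^ n := by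
  rcases eq_or_ne (nf x) [] with hx0 | hne
  · exact ⟨0, by rw [zpow_zero]; exact eq_one_of_nf_eq_nil hx0⟩
  obtain ⟨a, t', hcons⟩ : ∃ a t', nf x = a :: t' := by
    rcases hx : nf x with _ | ⟨a, t'⟩
    · exact absurd hx hne
    · exact ⟨a, t', rfl⟩
  have hlq := List.getLast?_eq_getLast hne
  rcases hl : (nf x).getLast hne with aG | bH
  · rw [hl] at hlq
    rcases a with g | h₀
    · exact absurd (key_case_ll hL1 hAE x hc hcons hlq) id
    · -- use x⁻¹
      have hc' : x⁻¹ * prodW (wordOf L) = prodW (wordOf L) * x⁻¹ := by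
        have h := congrArg (fun y => x⁻¹ * y * x⁻¹) hc
        simpa [mul_assoc] using h.symm
      have hsplit : nf x = (nf x).dropLast ++ [Sum.inl aG] := by
        conv_lhs => rw [← List.dropLast_append_getLast hne]
        rw [hl]
      have h1' : nf x⁻¹ = Sum.inl aG⁻¹ :: ((nf x).dropLast.map invL).reverse := by
        rw [nf_inv]
        conv_lhs => rw [hsplit]
        simp [invL]
      have h2' : (nf x⁻¹).getLast? = some (Sum.inr h₀⁻¹) := by
        rw [nf_inv]
        conv_lhs => rw [hcons]
        simp [invL]
      obtain ⟨q, hq⟩ := key_case1 hL1 hAE x⁻¹ hc' h1' h2'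
      refine ⟨-(q : ℤ), ?_⟩
      rw [zpow_neg, zpow_natCast, ← hq, inv_inv]
  · rw [hl] at hlq
    rcases a with g | h₀
    · obtain ⟨q, hq⟩ := key_case1 hL1 hAE x hc hcons hlq
      exact ⟨(q : ℤ), by rw [zpow_natCast]; exact hq⟩
    · exact absurd (key_case_rr hL1 hAE x hc hcons hlq) id

end Main

end

end AltCent

set_option maxHeartbeats 1000000 in
/-- The centralizer in `G ∗ H` of the alternating element of an admissible list
is infinite cyclic: it equals `{d^n : n ∈ ℤ}` for some element `d` of infinite
order; in particular it is isomorphic to `ℤ`. -/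
theorem centralizer_altElem_infinite_cyclic {G H : Type*} [Group G] [Group H]
    (L : List (G × H)) (hL : Admissible L) :
    ∃ d : G ∗ H, ¬ IsOfFinOrder d ∧
      Subgroup.centralizer {altElem L} = Subgroup.zpowers d ∧
      Nonempty (Subgroup.centralizer {altElem L} ≃* Multiplicative ℤ) := by
  obtain ⟨hL1, hAE⟩ := hL
  set t := AltCent.root L hL1 with ht
  set d := AltCent.prodW (AltCent.wordOf t) with hd
  have hAEt : AltCent.AE t := fun p hp => hAE p (AltCent.mem_root L hL1 hp)
  have htne : t ≠ [] := AltCent.root_ne_nil L hL1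
  obtain ⟨m, hm0, hmL⟩ := AltCent.exists_eq_pw_root L hL1
  have hcd : altElem L = d ^ m := by
    rw [AltCent.altElem_eq_prodW]
    conv_lhs => rw [hmL]
    rw [AltCent.prodW_wordOf_pw]
  have hdinf : ¬ IsOfFinOrder d := by
    rw [isOfFinOrder_iff_pow_eq_one]
    rintro ⟨n, hn, hpow⟩
    have h1 : AltCent.nf (d ^ n) = AltCent.wordOf (AltCent.pw t n) := by
      rw [← AltCent.prodW_wordOf_pw, AltCent.nf_prodW (AltCent.red_wordOf (hAEt.pw n))]
    rw [hpow, AltCent.nf_one] at h1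
    exact AltCent.pw_ne_nil htne hn (AltCent.wordOf_eq_nil_iff.1 h1.symm)
  have hcent : Subgroup.centralizer {altElem L} = Subgroup.zpowers d := by
    ext x
    rw [Subgroup.mem_centralizer_iff, Subgroup.mem_zpowers_iff]
    constructor
    · intro hx
      have hc : x * AltCent.prodW (AltCent.wordOf L) = AltCent.prodW (AltCent.wordOf L) * x := by
        have h := hx (altElem L) (Set.mem_singleton _)
        rw [AltCent.altElem_eq_prodW] at h
        exact h.symm
      obtain ⟨n, rfl⟩ := AltCent.comm_imp_zpow hL1 hAE x hc
      exact ⟨n, by rw [hd]⟩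
    · rintro ⟨k, rfl⟩
      intro y hy
      rw [Set.mem_singleton_iff] at hy
      subst hy
      rw [hcd]
      exact (((Commute.refl d).pow_left m).zpow_right k).eq
  refine ⟨d, hdinf, hcent, ?_⟩
  have hinj : Function.Injective (fun n : ℤ => d ^ n) :=
    injective_zpow_iff_not_isOfFinOrder.2 hdinf
  let f : Multiplicative ℤ →* Subgroup.zpowers d :=
    { toFun := fun n => ⟨d ^ (Multiplicative.toAdd n), Subgroup.mem_zpowers_iff.2 ⟨_, rfl⟩⟩
      map_one' := Subtype.ext (by simp)
      map_mul' := fun a b => Subtype.ext (by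
        show d ^ (Multiplicative.toAdd (a * b)) = d ^ _ * d ^ _
        rw [toAdd_mul, zpow_add]) }
  have hfbij : Function.Bijective f := by
    constructor
    · intro a b hab
      have h2 : d ^ (Multiplicative.toAdd a) = d ^ (Multiplicative.toAdd b) :=
        congrArg Subtype.val hab
      exact Multiplicative.toAdd.injective (hinj h2)
    · rintro ⟨y, hy⟩
      obtain ⟨k, hk⟩ := Subgroup.mem_zpowers_iff.1 hy
      exact ⟨Multiplicative.ofAdd k, Subtype.ext (by exact hk)⟩
  exact ⟨(MulEquiv.subgroupCongr hcent).trans (MulEquiv.ofBijective f hfbij).symm⟩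
end

section
/- Let G and H be groups. Every element of the free product G ∗ H is conjugate in G ∗ H to one of the following: the identity; inl g for some g ∈ G with g ≠ 1; inr h for some h ∈ H with h ≠ 1; or an alternating element c(L) for some admissible list L of pairs in G × H. (This is the classification in Example 5.1 of the four types of conjugacy classes of G ∗ H.) -/
open Monoid
open scoped Monoid.Coprod

section Aux

variable {G H : Type*} [Group G] [Group H]

lemma altElem_nil : altElem ([] : List (G × H)) = 1 := rfl

lemma altElem_cons (p : G × H) (L : List (G × H)) :
    altElem (p :: L) = Coprod.inl p.1 * Coprod.inr p.2 * altElem L := by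
  simp [altElem, mul_assoc]

lemma altElem_concat (L : List (G × H)) (p : G × H) :
    altElem (L ++ [p]) = altElem L * (Coprod.inl p.1 * Coprod.inr p.2) := by
  simp [altElem]

/-- A list is pre-admissible if all entries except possibly the first are nontrivial in the
first coordinate, and all entries except possibly the last are nontrivial in the second. -/
def Pre (L : List (G × H)) : Prop :=
  (∀ p ∈ L.tail, p.1 ≠ 1) ∧ ∀ p ∈ L.dropLast, p.2 ≠ 1

lemma pre_nil : Pre ([] : List (G × H)) := by simp [Pre]

lemma step_inl (g : G) (L : List (G × H)) (hL : Pre L) :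
    ∃ L', Pre L' ∧ altElem L' = Coprod.inl g * altElem L := by
  cases L with
  | nil => exact ⟨[(g, 1)], by simp [Pre], by simp [altElem]⟩
  | cons p T =>
    refine ⟨(g * p.1, p.2) :: T, ⟨?_, ?_⟩, ?_⟩
    · simpa using hL.1
    · intro q hq
      cases T with
      | nil => simp at hq
      | cons r s =>
        rw [List.dropLast_cons₂] at hq
        rcases List.mem_cons.1 hq with rfl | hq'
        · exact hL.2 p (by rw [List.dropLast_cons₂]; exact List.mem_cons_self)
        · exact hL.2 q (by rw [List.dropLast_cons₂]; exact List.mem_cons_of_mem _ hq')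
    · simp [altElem_cons, map_mul, mul_assoc]

lemma step_inr (h : H) (L : List (G × H)) (hL : Pre L) :
    ∃ L', Pre L' ∧ altElem L' = Coprod.inr h * altElem L := by
  by_cases hh : h = 1
  · exact ⟨L, hL, by simp [hh]⟩
  cases L with
  | nil => exact ⟨[(1, h)], by simp [Pre], by simp [altElem]⟩
  | cons p T =>
    by_cases ha : p.1 = 1
    · by_cases hb : h * p.2 = 1
      · refine ⟨T, ⟨?_, ?_⟩, ?_⟩
        · intro q hq; exact hL.1 q (List.mem_of_mem_tail hq)
        · intro q hq
          cases T with
          | nil => simp at hq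
          | cons r s =>
            exact hL.2 q (by rw [List.dropLast_cons₂]; exact List.mem_cons_of_mem _ hq)
        · have : (Coprod.inr (h * p.2) : G ∗ H) = 1 := by rw [hb, map_one]
          calc altElem T = Coprod.inr (h * p.2) * altElem T := by rw [this, one_mul]
            _ = Coprod.inr h * altElem (p :: T) := by
                simp [altElem_cons, ha, map_mul, mul_assoc]
      · refine ⟨(1, h * p.2) :: T, ⟨?_, ?_⟩, ?_⟩
        · simpa using hL.1
        · intro q hq
          cases T with
          | nil => simp at hq
          | cons r s =>
            rw [List.dropLast_cons₂] at hq
            rcases List.mem_cons.1 hq with rfl | hq'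
            · exact hb
            · exact hL.2 q (by rw [List.dropLast_cons₂]; exact List.mem_cons_of_mem _ hq')
        · simp [altElem_cons, ha, map_mul, mul_assoc]
    · refine ⟨(1, h) :: p :: T, ⟨?_, ?_⟩, ?_⟩
      · intro q hq
        rcases List.mem_cons.1 hq with rfl | hq'
        · exact ha
        · exact hL.1 q hq'
      · intro q hq
        rw [List.dropLast_cons₂] at hq
        rcases List.mem_cons.1 hq with rfl | hq'
        · exact hh
        · exact hL.2 q hq'
      · simp [altElem_cons, mul_assoc]

lemma exists_pre (x : G ∗ H) : ∃ L : List (G × H), Pre L ∧ altElem L = x := by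
  induction x using Coprod.induction_on' with
  | one => exact ⟨[], pre_nil, rfl⟩
  | inl_mul g x ih =>
    obtain ⟨L, hL, rfl⟩ := ih
    exact step_inl g L hL
  | inr_mul h x ih =>
    obtain ⟨L, hL, rfl⟩ := ih
    exact step_inr h L hL

/-- The classification predicate. -/
def Cl (x : G ∗ H) : Prop :=
  x = 1 ∨
    (∃ g : G, g ≠ 1 ∧ IsConj (Coprod.inl g : G ∗ H) x) ∨
    (∃ h : H, h ≠ 1 ∧ IsConj (Coprod.inr h : G ∗ H) x) ∨
    (∃ L : List (G × H), Admissible L ∧ IsConj (altElem L) x)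

lemma cl_of_isConj {x y : G ∗ H} (hc : IsConj x y) (hx : Cl x) : Cl y := by
  rcases hx with rfl | ⟨g, hg, hcg⟩ | ⟨h, hh, hch⟩ | ⟨L, hLa, hcL⟩
  · left
    obtain ⟨c, hc⟩ := isConj_iff.1 hc
    simpa using hc.symm
  · exact Or.inr (Or.inl ⟨g, hg, hcg.trans hc⟩)
  · exact Or.inr (Or.inr (Or.inl ⟨h, hh, hch.trans hc⟩))
  · exact Or.inr (Or.inr (Or.inr ⟨L, hLa, hcL.trans hc⟩))

lemma cl_pre : ∀ n : ℕ, ∀ L : List (G × H), L.length ≤ n → Pre L → Cl (altElem L) := by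
  intro n
  induction n with
  | zero =>
    intro L hlen _
    have : L = [] := List.eq_nil_of_length_eq_zero (Nat.le_zero.1 hlen)
    subst this
    exact Or.inl rfl
  | succ n ih =>
    rintro L hlen hL
    rcases L with _ | ⟨⟨g₁, h₁⟩, T⟩
    · exact Or.inl rfl
    rcases T.eq_nil_or_concat with rfl | ⟨D, ⟨a, b⟩, rfl⟩
    · -- singleton case
      by_cases hg : g₁ = 1
      · by_cases hh : h₁ = 1
        · exact Or.inl (by simp [altElem_cons, altElem_nil, hg, hh])
        · refine Or.inr (Or.inr (Or.inl ⟨h₁, hh, ?_⟩))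
          have : altElem [(g₁, h₁)] = Coprod.inr h₁ := by simp [altElem_cons, altElem_nil, hg]
          rw [this]
      · by_cases hh : h₁ = 1
        · refine Or.inr (Or.inl ⟨g₁, hg, ?_⟩)
          have : altElem [(g₁, h₁)] = Coprod.inl g₁ := by simp [altElem_cons, altElem_nil, hh]
          rw [this]
        · exact Or.inr (Or.inr (Or.inr ⟨[(g₁, h₁)], ⟨by simp, by simp [hg, hh]⟩,
            IsConj.refl _⟩))
    · -- length ≥ 2 : L = (g₁,h₁) :: (D ++ [(a,b)])
      rw [List.concat_eq_append]
      rw [List.concat_eq_append] at hL hlen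
      have hcons : ((g₁, h₁) :: (D ++ [(a, b)]) : List (G × H)) =
          ((g₁, h₁) :: D) ++ [(a, b)] := rfl
      have htail : ∀ p ∈ D ++ [(a, b)], p.1 ≠ (1 : G) := by simpa using hL.1
      have hdrop : ∀ p ∈ ((g₁, h₁) :: D : List (G × H)), p.2 ≠ (1 : H) := by
        have := hL.2
        rw [hcons, List.dropLast_concat] at this
        exact this
      have hD1 : ∀ p ∈ D, p.1 ≠ (1 : G) := fun p hp => htail p (List.mem_append_left _ hp)
      have hD2 : ∀ p ∈ D, p.2 ≠ (1 : H) := fun p hp => hdrop p (List.mem_cons_of_mem _ hp)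
      have ha : a ≠ (1 : G) := htail (a, b) (List.mem_append_right _ (List.mem_singleton_self _))
      have hh₁ : h₁ ≠ (1 : H) := hdrop (g₁, h₁) (List.mem_cons_self)
      have hlen' : D.length + 1 ≤ n := by
        simp only [List.length_cons, List.length_append, List.length_singleton] at hlen
        omega
      by_cases hg₁ : g₁ = 1
      · -- cyclically rotate: conjugate by inr h₁
        set L'' : List (G × H) := D ++ [(a, b * h₁)] with hL''
        have hpre'' : Pre L'' := by
          constructor
          · intro p hp
            have hp' : p ∈ L'' := List.mem_of_mem_tail hp
            rcases List.mem_append.1 hp' with hpD | hps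
            · exact hD1 p hpD
            · rw [List.mem_singleton] at hps; subst hps; exact ha
          · rw [hL'', List.dropLast_concat]
            exact hD2
        have hlen'' : L''.length ≤ n := by
          rw [hL'']; simpa using hlen'
        have key : altElem L'' = altElem (D ++ [(a, b)]) * Coprod.inr h₁ := by
          simp [hL'', altElem_concat, map_mul, mul_assoc]
        have hconj : IsConj (altElem L'') (altElem ((g₁, h₁) :: (D ++ [(a, b)]))) := by
          refine isConj_iff.2 ⟨Coprod.inr h₁, ?_⟩
          rw [key, altElem_cons, hg₁, map_one, one_mul]
          group
        exact cl_of_isConj hconj (ih L'' hlen'' hpre'')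
      · by_cases hb : b = 1
        · -- cyclically rotate the other way: conjugate by inl a
          set L'' : List (G × H) := (a * g₁, h₁) :: D with hL''
          have hpre'' : Pre L'' := by
            constructor
            · intro p hp
              exact hD1 p (by simpa [hL''] using hp)
            · intro p hp
              have hp' : p ∈ L'' := List.dropLast_subset _ hp
              rcases List.mem_cons.1 hp' with rfl | hpD
              · exact hh₁
              · exact hD2 p hpD
          have hlen'' : L''.length ≤ n := by
            rw [hL'']; simpa using hlen'
          have key : altElem L'' = Coprod.inl a * altElem ((g₁, h₁) :: D) := by
            simp [hL'', altElem_cons, map_mul, mul_assoc]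
          have hvalue : altElem ((g₁, h₁) :: (D ++ [(a, b)])) =
              altElem ((g₁, h₁) :: D) * Coprod.inl a := by
            rw [hcons, altElem_concat, hb]
            simp [mul_assoc]
          have hconj : IsConj (altElem L'') (altElem ((g₁, h₁) :: (D ++ [(a, b)]))) := by
            refine isConj_iff.2 ⟨(Coprod.inl a)⁻¹, ?_⟩
            rw [key, hvalue]
            group
          exact cl_of_isConj hconj (ih L'' hlen'' hpre'')
        · -- admissible
          refine Or.inr (Or.inr (Or.inr ⟨(g₁, h₁) :: (D ++ [(a, b)]), ⟨by simp, ?_⟩,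
            IsConj.refl _⟩))
          intro p hp
          rcases List.mem_cons.1 hp with rfl | hp'
          · exact ⟨hg₁, hh₁⟩
          rcases List.mem_append.1 hp' with hpD | hps
          · exact ⟨hD1 p hpD, hD2 p hpD⟩
          · rw [List.mem_singleton] at hps; subst hps; exact ⟨ha, hb⟩

end Aux

/-- Every element of `G ∗ H` is conjugate to the identity, to `inl g` with
`g ≠ 1`, to `inr h` with `h ≠ 1`, or to an alternating element `altElem L` for
an admissible list `L`. -/
theorem conj_classification {G H : Type*} [Group G] [Group H] (x : G ∗ H) :
    x = 1 ∨
    (∃ g : G, g ≠ 1 ∧ IsConj (Coprod.inl g : G ∗ H) x) ∨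
    (∃ h : H, h ≠ 1 ∧ IsConj (Coprod.inr h : G ∗ H) x) ∨
    (∃ L : List (G × H), Admissible L ∧ IsConj (altElem L) x) := by
  obtain ⟨L, hL, rfl⟩ := exists_pre x
  exact cl_pre L.length L le_rfl hL
end

section
/- Let G and H be groups and g₁, g₂ ∈ G. Then inl g₁ and inl g₂ are conjugate in the free product G ∗ H if and only if g₁ and g₂ are conjugate in G. (This justifies the paper's indexing in Example 5.1 of the conjugacy classes of G ∗ H of factor type by the conjugacy classes of G.) -/
open Monoid
open scoped Monoid.Coprod

/-- Two elements of `G` are conjugate in the free product `G ∗ H` iff they are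
conjugate in `G`. -/
theorem isConj_inl_iff {G H : Type*} [Group G] [Group H] (g₁ g₂ : G) :
    IsConj (Coprod.inl g₁ : G ∗ H) (Coprod.inl g₂ : G ∗ H) ↔ IsConj g₁ g₂ :=
  -- `Coprod.fst` retracts `G ∗ H` onto `G`, so it carries the conjugacy back.
  ⟨fun h => by simpa using (Coprod.fst : G ∗ H →* G).map_isConj h,
    (Coprod.inl : G →* G ∗ H).map_isConj⟩
end

section
/- Let G and H be groups and let L₁, L₂ be admissible lists of pairs in G × H. Then the alternating elements c(L₁) and c(L₂) are conjugate in G ∗ H if and only if L₂ is a cyclic rotation of L₁. (This is the group-level counterpart of Lemma 3.2 and justifies indexing the fourth family of conjugacy classes of G ∗ H, and the set W₀, by cyclic equivalence classes of alternating words.) -/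
open Monoid
open scoped Monoid.Coprod

namespace FPC

variable {G H : Type*} [Group G] [Group H]

def ne1 : G ⊕ H → Prop := Sum.elim (fun g => g ≠ 1) (fun h => h ≠ 1)

def opp (a b : G ⊕ H) : Prop := a.isLeft ≠ b.isLeft

def Red (l : List (G ⊕ H)) : Prop := (∀ a ∈ l, ne1 a) ∧ l.IsChain opp

@[simp] lemma red_nil : Red ([] : List (G ⊕ H)) := ⟨by simp, List.isChain_nil⟩

open Classical in
noncomputable def rcons : G ⊕ H → List (G ⊕ H) → List (G ⊕ H)
  | .inl g, .inl g' :: t => if g * g' = 1 then t else .inl (g * g') :: t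
  | .inl g, .inr h' :: t => if g = 1 then .inr h' :: t else .inl g :: .inr h' :: t
  | .inl g, [] => if g = 1 then [] else [.inl g]
  | .inr h, .inr h' :: t => if h * h' = 1 then t else .inr (h * h') :: t
  | .inr h, .inl g' :: t => if h = 1 then .inl g' :: t else .inr h :: .inl g' :: t
  | .inr h, [] => if h = 1 then [] else [.inr h]

open Classical in
@[simp] lemma rcons_ll (g g' : G) (t : List (G ⊕ H)) :
    rcons (.inl g) (.inl g' :: t) = if g * g' = 1 then t else .inl (g * g') :: t := rfl
open Classical in
@[simp] lemma rcons_lr (g : G) (h' : H) (t : List (G ⊕ H)) :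
    rcons (.inl g) (.inr h' :: t) = if g = 1 then .inr h' :: t else .inl g :: .inr h' :: t := rfl
open Classical in
@[simp] lemma rcons_lnil (g : G) :
    rcons (.inl g) ([] : List (G ⊕ H)) = if g = 1 then [] else [.inl g] := rfl
open Classical in
@[simp] lemma rcons_rr (h h' : H) (t : List (G ⊕ H)) :
    rcons (.inr h) (.inr h' :: t) = if h * h' = 1 then t else .inr (h * h') :: t := rfl
open Classical in
@[simp] lemma rcons_rl (h : H) (g' : G) (t : List (G ⊕ H)) :
    rcons (.inr h) (.inl g' :: t) = if h = 1 then .inl g' :: t else .inr h :: .inl g' :: t := rfl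
open Classical in
@[simp] lemma rcons_rnil (h : H) :
    rcons (.inr h) ([] : List (G ⊕ H)) = if h = 1 then [] else [.inr h] := rfl

lemma rcons_head (a : G ⊕ H) (l : List (G ⊕ H)) (h1 : ne1 a)
    (h2 : ∀ b ∈ l.head?, opp a b) : rcons a l = a :: l := by
  cases a with
  | inl g =>
    cases l with
    | nil => simp [ne1] at h1; simp [h1]
    | cons b t =>
      cases b with
      | inl g' => exact absurd (h2 _ rfl) (by simp [opp])
      | inr h' => simp [ne1] at h1; simp [h1]
  | inr h =>
    cases l with
    | nil => simp [ne1] at h1; simp [h1]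
    | cons b t =>
      cases b with
      | inl g' => simp [ne1] at h1; simp [h1]
      | inr h' => exact absurd (h2 _ rfl) (by simp [opp])

lemma length_rcons (a : G ⊕ H) (l : List (G ⊕ H)) :
    (rcons a l).length ≤ l.length + 1 := by
  cases a <;> rcases l with _ | ⟨b, t⟩ <;> (try cases b) <;> simp <;> (try split) <;> (try simp) <;> omega

lemma Red.tail {a : G ⊕ H} {l : List (G ⊕ H)} (h : Red (a :: l)) : Red l :=
  ⟨fun x hx => h.1 x (List.mem_cons_of_mem _ hx), h.2.tail⟩

lemma Red.rcons {l : List (G ⊕ H)} (hl : Red l) (a : G ⊕ H) : Red (rcons a l) := by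
  obtain ⟨hm, hc⟩ := hl
  cases a with
  | inl g =>
    rcases l with _ | ⟨b, t⟩
    · rw [rcons_lnil]; split <;> simp_all [Red, ne1]
    · cases b with
      | inl g' =>
        rw [rcons_ll]; split
        · exact ⟨fun x hx => hm x (by simp [hx]), hc.tail⟩
        · refine ⟨?_, ?_⟩
          · intro x hx
            rcases List.mem_cons.1 hx with rfl | hx
            · simpa [ne1] using ‹¬ g * g' = 1›
            · exact hm x (by simp [hx])
          · rw [List.isChain_cons] at hc ⊢
            exact ⟨fun y hy => by simpa [opp] using hc.1 y hy, hc.2⟩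
      | inr h' =>
        rw [rcons_lr]; split
        · exact ⟨hm, hc⟩
        · refine ⟨?_, ?_⟩
          · intro x hx
            rcases List.mem_cons.1 hx with rfl | hx
            · simpa [ne1] using ‹¬ g = 1›
            · exact hm x hx
          · exact List.isChain_cons.2 ⟨fun y hy => by simp at hy; subst hy; simp [opp], hc⟩
  | inr h =>
    rcases l with _ | ⟨b, t⟩
    · rw [rcons_rnil]; split <;> simp_all [Red, ne1]
    · cases b with
      | inr h' =>
        rw [rcons_rr]; split
        · exact ⟨fun x hx => hm x (by simp [hx]), hc.tail⟩
        · refine ⟨?_, ?_⟩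
          · intro x hx
            rcases List.mem_cons.1 hx with rfl | hx
            · simpa [ne1] using ‹¬ h * h' = 1›
            · exact hm x (by simp [hx])
          · rw [List.isChain_cons] at hc ⊢
            exact ⟨fun y hy => by simpa [opp] using hc.1 y hy, hc.2⟩
      | inl g' =>
        rw [rcons_rl]; split
        · exact ⟨hm, hc⟩
        · refine ⟨?_, ?_⟩
          · intro x hx
            rcases List.mem_cons.1 hx with rfl | hx
            · simpa [ne1] using ‹¬ h = 1›
            · exact hm x hx
          · exact List.isChain_cons.2 ⟨fun y hy => by simp at hy; subst hy; simp [opp], hc⟩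


def elt : G ⊕ H → G ∗ H := Sum.elim Coprod.inl Coprod.inr

@[simp] lemma elt_inl (g : G) : (elt (Sum.inl g) : G ∗ H) = Coprod.inl g := rfl
@[simp] lemma elt_inr (h : H) : (elt (Sum.inr h) : G ∗ H) = Coprod.inr h := rfl

def toCoprod (l : List (G ⊕ H)) : G ∗ H := (l.map elt).prod

@[simp] lemma toCoprod_nil : toCoprod ([] : List (G ⊕ H)) = 1 := rfl
@[simp] lemma toCoprod_cons (a : G ⊕ H) (l) : toCoprod (a :: l) = elt a * toCoprod l := by
  simp [toCoprod]
@[simp] lemma toCoprod_append (l₁ l₂ : List (G ⊕ H)) :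
    toCoprod (l₁ ++ l₂) = toCoprod l₁ * toCoprod l₂ := by simp [toCoprod]

lemma toCoprod_rcons (a : G ⊕ H) (l : List (G ⊕ H)) :
    toCoprod (rcons a l) = elt a * toCoprod l := by
  cases a with
  | inl g =>
    rcases l with _ | ⟨b, t⟩
    · rw [rcons_lnil]; split_ifs with h
      · simp [h]
      · simp
    · cases b with
      | inl g' =>
        rw [rcons_ll]; split_ifs with h
        · simp [← mul_assoc, ← map_mul, h]
        · simp [← mul_assoc, ← map_mul]
      | inr h' =>
        rw [rcons_lr]; split_ifs with h
        · simp [h]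
        · simp
  | inr h =>
    rcases l with _ | ⟨b, t⟩
    · rw [rcons_rnil]; split_ifs with hh
      · simp [hh]
      · simp
    · cases b with
      | inr h' =>
        rw [rcons_rr]; split_ifs with hh
        · simp [← mul_assoc, ← map_mul, hh]
        · simp [← mul_assoc, ← map_mul]
      | inl g' =>
        rw [rcons_rl]; split_ifs with hh
        · simp [hh]
        · simp

lemma rcons_one_l (l : List (G ⊕ H)) (hl : Red l) : rcons (Sum.inl (1 : G)) l = l := by
  rcases l with _ | ⟨b, t⟩
  · simp
  · cases b with
    | inl g' =>
      have : g' ≠ 1 := by simpa [ne1] using hl.1 _ (List.mem_cons_self)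
      rw [rcons_ll]; simp [this]
    | inr h' => simp

lemma rcons_one_r (l : List (G ⊕ H)) (hl : Red l) : rcons (Sum.inr (1 : H)) l = l := by
  rcases l with _ | ⟨b, t⟩
  · simp
  · cases b with
    | inr h' =>
      have : h' ≠ 1 := by simpa [ne1] using hl.1 _ (List.mem_cons_self)
      rw [rcons_rr]; simp [this]
    | inl g' => simp

lemma not_inl_head {a : G} {b : G} {t : List (G ⊕ H)} {l : List (G ⊕ H)}
    (hl : Red l) (h : l = Sum.inl a :: Sum.inl b :: t) : False := by
  subst h
  have := hl.2
  rw [List.isChain_cons_cons] at this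
  simp [opp] at this

lemma not_inr_head {a : H} {b : H} {t : List (G ⊕ H)} {l : List (G ⊕ H)}
    (hl : Red l) (h : l = Sum.inr a :: Sum.inr b :: t) : False := by
  subst h
  have := hl.2
  rw [List.isChain_cons_cons] at this
  simp [opp] at this

lemma rcons_mul_l (g g' : G) (l : List (G ⊕ H)) (hl : Red l) :
    rcons (Sum.inl (g * g')) l = rcons (Sum.inl g) (rcons (Sum.inl g') l) := by
  rcases l with _ | ⟨b, t⟩
  · by_cases hg' : g' = 1
    · subst hg'; rw [mul_one]; simp
    · rw [rcons_lnil, rcons_lnil, if_neg hg', rcons_ll]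
  · cases b with
    | inl a =>
      have hta : Red t := hl.tail
      rw [rcons_ll, rcons_ll]
      split_ifs with h1 h2 h2
      · -- (g*g')*a = 1, g'*a = 1 : goal t = rcons (inl g) t, and g = 1
        have hg : g = 1 := by
          have : g * (g' * a) = 1 := by rw [← mul_assoc]; exact h1
          rwa [h2, mul_one] at this
        rw [hg, rcons_one_l t hta]
      · -- (g*g')*a = 1, g'*a ≠ 1 : rcons (inl g) (inl (g'*a) :: t)
        rw [rcons_ll]
        have : g * (g' * a) = 1 := by rw [← mul_assoc]; exact h1
        simp [this]
      · -- (g*g')*a ≠ 1, g'*a = 1 : goal inl (g*g'*a) :: t = rcons (inl g) t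
        have hga : g * g' * a = g := by rw [mul_assoc, h2, mul_one]
        have hg : g ≠ 1 := fun hh => h1 (by rw [hga, hh])
        rcases t with _ | ⟨c, t'⟩
        · rw [rcons_lnil]; simp [hg, hga]
        · cases c with
          | inl c => exact (not_inl_head hl rfl).elim
          | inr c => rw [rcons_lr]; simp [hg, hga]
      · rw [rcons_ll]
        have : ¬ g * (g' * a) = 1 := by rw [← mul_assoc]; exact h1
        simp [this, mul_assoc]
    | inr a =>
      rw [rcons_lr, rcons_lr]
      split_ifs with h1 h2 h2
      · have hg : g = 1 := by rw [h2, mul_one] at h1; exact h1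
        rw [hg, rcons_lr, if_pos rfl]
      · rw [rcons_ll, if_pos h1]
      · have hg : g ≠ 1 := by rw [h2, mul_one] at h1; exact h1
        rw [h2, mul_one, rcons_lr, if_neg hg]
      · rw [rcons_ll, if_neg h1]

lemma rcons_mul_r (g g' : H) (l : List (G ⊕ H)) (hl : Red l) :
    rcons (Sum.inr (g * g')) l = rcons (Sum.inr g) (rcons (Sum.inr g') l) := by
  rcases l with _ | ⟨b, t⟩
  · by_cases hg' : g' = 1
    · subst hg'; rw [mul_one]; simp
    · rw [rcons_rnil, rcons_rnil, if_neg hg', rcons_rr]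
  · cases b with
    | inr a =>
      have hta : Red t := hl.tail
      rw [rcons_rr, rcons_rr]
      split_ifs with h1 h2 h2
      · have hg : g = 1 := by
          have : g * (g' * a) = 1 := by rw [← mul_assoc]; exact h1
          rwa [h2, mul_one] at this
        rw [hg, rcons_one_r t hta]
      · rw [rcons_rr]
        have : g * (g' * a) = 1 := by rw [← mul_assoc]; exact h1
        simp [this]
      · have hga : g * g' * a = g := by rw [mul_assoc, h2, mul_one]
        have hg : g ≠ 1 := fun hh => h1 (by rw [hga, hh])
        rcases t with _ | ⟨c, t'⟩
        · rw [rcons_rnil]; simp [hg, hga]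
        · cases c with
          | inr c => exact (not_inr_head hl rfl).elim
          | inl c => rw [rcons_rl]; simp [hg, hga]
      · rw [rcons_rr]
        have : ¬ g * (g' * a) = 1 := by rw [← mul_assoc]; exact h1
        simp [this, mul_assoc]
    | inl a =>
      rw [rcons_rl, rcons_rl]
      split_ifs with h1 h2 h2
      · have hg : g = 1 := by rw [h2, mul_one] at h1; exact h1
        rw [hg, rcons_rl, if_pos rfl]
      · rw [rcons_rr, if_pos h1]
      · have hg : g ≠ 1 := by rw [h2, mul_one] at h1; exact h1
        rw [h2, mul_one, rcons_rl, if_neg hg]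
      · rw [rcons_rr, if_neg h1]

noncomputable def phiG : G →* Function.End {l : List (G ⊕ H) // Red l} where
  toFun g s := ⟨rcons (Sum.inl g) s.1, s.2.rcons _⟩
  map_one' := funext fun s => Subtype.ext (rcons_one_l s.1 s.2)
  map_mul' g g' := funext fun s => Subtype.ext (rcons_mul_l g g' s.1 s.2)

noncomputable def phiH : H →* Function.End {l : List (G ⊕ H) // Red l} where
  toFun h s := ⟨rcons (Sum.inr h) s.1, s.2.rcons _⟩
  map_one' := funext fun s => Subtype.ext (rcons_one_r s.1 s.2)
  map_mul' h h' := funext fun s => Subtype.ext (rcons_mul_r h h' s.1 s.2)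

noncomputable def phi : G ∗ H →* Function.End {l : List (G ⊕ H) // Red l} :=
  Coprod.lift phiG phiH

lemma phi_inl (g : G) (s : {l : List (G ⊕ H) // Red l}) : (phi (Coprod.inl g) s).1 = rcons (Sum.inl g) s.1 := by
  rw [phi, Coprod.lift_apply_inl]; rfl

lemma phi_inr (h : H) (s : {l : List (G ⊕ H) // Red l}) : (phi (Coprod.inr h) s).1 = rcons (Sum.inr h) s.1 := by
  rw [phi, Coprod.lift_apply_inr]; rfl

lemma phi_mul (x y : G ∗ H) (s) : phi (x * y) s = phi x (phi y s) := by
  rw [map_mul]; rfl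

lemma toCoprod_phi (x : G ∗ H) : ∀ s, toCoprod ((phi x) s).1 = x * toCoprod s.1 := by
  induction x using Coprod.induction_on' with
  | one => intro s; rw [map_one, one_mul]; rfl
  | inl_mul m x ih =>
    intro s
    rw [phi_mul, phi_inl, toCoprod_rcons, elt_inl, ih, mul_assoc]
  | inr_mul n x ih =>
    intro s
    rw [phi_mul, phi_inr, toCoprod_rcons, elt_inr, ih, mul_assoc]

noncomputable def nf (x : G ∗ H) : List (G ⊕ H) := (phi x ⟨[], red_nil⟩).1

lemma red_nf (x : G ∗ H) : Red (nf x) := (phi x ⟨[], red_nil⟩).2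

lemma toCoprod_nf (x : G ∗ H) : toCoprod (nf x) = x := by
  have := toCoprod_phi x ⟨[], red_nil⟩
  simpa [nf] using this

noncomputable def rlist (u v : List (G ⊕ H)) : List (G ⊕ H) := List.foldr rcons v u

@[simp] lemma rlist_nil_left (v : List (G ⊕ H)) : rlist [] v = v := rfl
@[simp] lemma rlist_cons (a : G ⊕ H) (u v : List (G ⊕ H)) :
    rlist (a :: u) v = rcons a (rlist u v) := rfl
lemma rlist_append (u₁ u₂ v : List (G ⊕ H)) :
    rlist (u₁ ++ u₂) v = rlist u₁ (rlist u₂ v) := List.foldr_append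

lemma phi_toCoprod_apply (u : List (G ⊕ H)) (s) :
    (phi (toCoprod u) s).1 = rlist u s.1 := by
  induction u with
  | nil => rw [toCoprod_nil, map_one]; rfl
  | cons a u ih =>
    rw [toCoprod_cons, phi_mul, rlist_cons, ← ih]
    cases a with
    | inl g => rw [elt_inl, phi_inl]
    | inr h => rw [elt_inr, phi_inr]

lemma length_rlist (u v : List (G ⊕ H)) : (rlist u v).length ≤ u.length + v.length := by
  induction u with
  | nil => simp
  | cons a u ih =>
    calc (rcons a (rlist u v)).length ≤ (rlist u v).length + 1 := length_rcons _ _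
    _ ≤ u.length + v.length + 1 := by omega
    _ = (a :: u).length + v.length := by simp; omega

lemma head?_take_one (a v : List (G ⊕ H)) : (a ++ v.take 1).head? = (a ++ v).head? := by
  cases a <;> cases v <;> simp

lemma rlist_no_cancel : ∀ (a : List (G ⊕ H)) (v : List (G ⊕ H)), (∀ x ∈ a, ne1 x) →
    List.IsChain opp (a ++ v.take 1) → rlist a v = a ++ v := by
  intro a
  induction a with
  | nil => intro v _ _; simp
  | cons x a ih =>
    intro v h1 h2
    rw [List.cons_append, List.isChain_cons] at h2
    have hx : rcons x (a ++ v) = x :: (a ++ v) :=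
      rcons_head _ _ (h1 x (List.mem_cons_self))
        (fun b hb => h2.1 b (by rwa [head?_take_one]))
    rw [rlist_cons, ih v (fun y hy => h1 y (List.mem_cons_of_mem _ hy)) h2.2, hx,
      List.cons_append]

lemma toCoprod_rlist (u v : List (G ⊕ H)) :
    toCoprod (rlist u v) = toCoprod u * toCoprod v := by
  induction u with
  | nil => simp
  | cons a u ih => rw [rlist_cons, toCoprod_rcons, ih, toCoprod_cons, mul_assoc]

lemma rlist_nil_right {B : List (G ⊕ H)} (hB : Red B) : rlist B [] = B := by
  rw [rlist_no_cancel B [] hB.1 (by simpa using hB.2)]; simp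

lemma nf_toCoprod {B : List (G ⊕ H)} (hB : Red B) : nf (toCoprod B) = B := by
  rw [nf, phi_toCoprod_apply, rlist_nil_right hB]

lemma nf_mul_right (x : G ∗ H) {B : List (G ⊕ H)} (hB : Red B) :
    nf (x * toCoprod B) = rlist (nf x) B := by
  have h1 : phi (toCoprod B) ⟨[], red_nil⟩ = ⟨B, hB⟩ := Subtype.ext (nf_toCoprod hB)
  rw [nf, phi_mul, h1]
  conv_lhs => rw [← toCoprod_nf x]
  rw [phi_toCoprod_apply]

lemma nf_mul_left {B : List (G ⊕ H)} (hB : Red B) (x : G ∗ H) :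
    nf (toCoprod B * x) = rlist B (nf x) := by
  rw [nf, phi_mul, phi_toCoprod_apply]; rfl

lemma derive {A₁ A₂ : List (G ⊕ H)} (h1 : Red A₁) (h2 : Red A₂) {x : G ∗ H}
    (hx : x * toCoprod A₁ = toCoprod A₂ * x) :
    rlist (nf x) A₁ = rlist A₂ (nf x) := by
  have := congrArg nf hx
  rwa [nf_mul_right x h1, nf_mul_left h2 x] at this


section ListUtil
variable {α : Type*}

lemma conj_lists_aux (n : ℕ) : ∀ (u a b : List α), u.length ≤ n → u ++ a = b ++ u →
    ∃ s t, b = s ++ t ∧ a = t ++ s := by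
  induction n with
  | zero =>
    intro u a b hlen heq
    have hu : u = [] := List.eq_nil_of_length_eq_zero (Nat.le_zero.1 hlen)
    subst hu
    simp only [List.nil_append, List.append_nil] at heq
    exact ⟨[], b, by simp, by simp [heq]⟩
  | succ n ih =>
    intro u a b hlen heq
    rcases eq_or_ne b [] with rfl | hbne
    · simp only [List.nil_append] at heq
      have h' : u ++ a = u ++ [] := by simpa using heq
      have : a = [] := List.append_cancel_left h'
      exact ⟨[], [], by simp, by simp [this]⟩
    by_cases hub : u.length ≤ b.length
    · have h1 : u <+: b ++ u := ⟨a, heq⟩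
      have h3 : u <+: b := List.prefix_of_prefix_length_le h1 (b.prefix_append u) hub
      obtain ⟨r, rfl⟩ := h3
      refine ⟨u, r, rfl, ?_⟩
      rw [List.append_assoc] at heq
      exact List.append_cancel_left heq
    · push_neg at hub
      have h1 : b <+: u ++ a := by rw [heq]; exact b.prefix_append u
      have h3 : b <+: u := List.prefix_of_prefix_length_le h1 (u.prefix_append a) hub.le
      obtain ⟨u', rfl⟩ := h3
      simp only [List.append_assoc] at heq
      have heq' : u' ++ a = b ++ u' := List.append_cancel_left heq
      have hlen' : u'.length ≤ n := by
        have hb1 : 1 ≤ b.length := by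
          cases b
          · exact absurd rfl hbne
          · simp
        simp only [List.length_append] at hlen
        omega
      exact ih u' a b hlen' heq'

lemma conj_lists {u a b : List α} (heq : u ++ a = b ++ u) :
    ∃ s t, b = s ++ t ∧ a = t ++ s :=
  conj_lists_aux u.length u a b le_rfl heq

lemma rot_iff (L M : List α) : (∃ u t, L = u ++ t ∧ M = t ++ u) ↔ L ~r M := by
  constructor
  · rintro ⟨u, t, rfl, rfl⟩
    exact List.isRotated_append
  · rintro ⟨m, rfl⟩
    rcases eq_or_ne L [] with rfl | hL
    · exact ⟨[], [], by simp, by simp⟩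
    have hpos : 0 < L.length := List.length_pos_iff.2 hL
    refine ⟨L.take (m % L.length), L.drop (m % L.length), (List.take_append_drop _ _).symm, ?_⟩
    rw [← List.rotate_mod, List.rotate_eq_drop_append_take (Nat.mod_lt _ hpos).le]

end ListUtil

def toL : List (G × H) → List (G ⊕ H)
  | [] => []
  | p :: L => Sum.inl p.1 :: Sum.inr p.2 :: toL L

@[simp] lemma toL_nil : toL ([] : List (G × H)) = [] := rfl
@[simp] lemma toL_cons (p : G × H) (L : List (G × H)) :
    toL (p :: L) = Sum.inl p.1 :: Sum.inr p.2 :: toL L := rfl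

lemma toL_append (L₁ L₂ : List (G × H)) : toL (L₁ ++ L₂) = toL L₁ ++ toL L₂ := by
  induction L₁ with
  | nil => simp
  | cons p L ih => simp [ih]

@[simp] lemma length_toL (L : List (G × H)) : (toL L).length = 2 * L.length := by
  induction L with
  | nil => simp
  | cons p L ih => simp [ih]; omega

lemma toL_inj : ∀ {L L' : List (G × H)}, toL L = toL L' → L = L' := by
  intro L
  induction L with
  | nil => intro L' h; cases L' <;> simp_all
  | cons p L ih =>
    intro L' h
    cases L' with
    | nil => simp at h
    | cons p' M =>
      simp only [toL_cons, List.cons.injEq] at h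
      obtain ⟨h1, h2, h3⟩ := h
      have hp : p = p' := by cases p; cases p'; simp_all
      rw [hp, ih h3]

lemma altElem_eq (L : List (G × H)) : _root_.altElem L = toCoprod (toL L) := by
  induction L with
  | nil => rfl
  | cons p L ih =>
    simp only [_root_.altElem, List.map_cons, List.prod_cons, toL_cons, toCoprod_cons, elt_inl, elt_inr]
    rw [← ih, _root_.altElem, mul_assoc]

lemma red_toL {L : List (G × H)} (hL : ∀ p ∈ L, p.1 ≠ 1 ∧ p.2 ≠ 1) : Red (toL L) := by
  induction L with
  | nil => simp
  | cons p L ih =>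
    have hp := hL p (List.mem_cons_self)
    have hred := ih (fun p hp => hL p (List.mem_cons_of_mem _ hp))
    refine ⟨?_, ?_⟩
    · intro a ha
      simp only [toL_cons, List.mem_cons] at ha
      rcases ha with rfl | rfl | ha
      · simpa [ne1] using hp.1
      · simpa [ne1] using hp.2
      · exact hred.1 _ ha
    · rw [toL_cons, List.isChain_cons_cons, List.isChain_cons]
      refine ⟨by simp [opp], ?_, hred.2⟩
      intro y hy
      cases L with
      | nil => simp at hy
      | cons q M => simp at hy; subst hy; simp [opp]

lemma toL_split : ∀ (L : List (G × H)) (s t : List (G ⊕ H)), toL L = s ++ t →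
    (∃ Ls Lt, L = Ls ++ Lt ∧ s = toL Ls ∧ t = toL Lt) ∨
    (∃ Ls : List (G × H), ∃ p : G × H, ∃ Lt : List (G × H),
      L = Ls ++ p :: Lt ∧ s = toL Ls ++ [Sum.inl p.1] ∧
      t = Sum.inr p.2 :: toL Lt) := by
  intro L
  induction L with
  | nil =>
    intro s t h
    left
    have h' : s = [] ∧ t = [] := List.append_eq_nil_iff.1 h.symm
    exact ⟨[], [], by simp, by simp [h'.1], by simp [h'.2]⟩
  | cons p L ih =>
    intro s t h
    match s with
    | [] =>
      left
      exact ⟨[], p :: L, by simp, rfl, by simpa using h.symm⟩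
    | [x] =>
      right
      simp only [toL_cons, List.singleton_append, List.cons.injEq] at h
      exact ⟨[], p, L, by simp, by simp [← h.1], h.2.symm⟩
    | x :: y :: s' =>
      simp only [toL_cons, List.cons_append, List.cons.injEq] at h
      obtain ⟨hx, hy, hrest⟩ := h
      rcases ih s' t hrest with ⟨Ls, Lt, rfl, rfl, rfl⟩ | ⟨Ls, p', Lt, rfl, rfl, rfl⟩
      · left
        exact ⟨p :: Ls, Lt, by simp, by simp [hx, hy], rfl⟩
      · right
        exact ⟨p :: Ls, p', Lt, by simp, by simp [hx, hy], rfl⟩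

lemma toL_concat_head (S : List (G × H)) (x : G) (r : List (G ⊕ H)) :
    ∃ g : G, (toL S ++ Sum.inl x :: r).head? = some (Sum.inl g) := by
  cases S with
  | nil => exact ⟨x, rfl⟩
  | cons p S => exact ⟨p.1, rfl⟩


lemma red_of_append_left {a b : List (G ⊕ H)} (h : Red (a ++ b)) : Red a :=
  ⟨fun x hx => h.1 x (List.mem_append_left _ hx), (List.isChain_append.1 h.2).1⟩

lemma chain'_junction {a b : List (G ⊕ H)} (h : List.IsChain opp (a ++ b)) :
    ∀ x ∈ a.getLast?, ∀ y ∈ b.head?, opp x y := (List.isChain_append.1 h).2.2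

lemma rlist_clean {a v : List (G ⊕ H)} (ha : Red a)
    (hjunc : ∀ x ∈ a.getLast?, ∀ y ∈ v.head?, opp x y) :
    rlist a v = a ++ v := by
  apply rlist_no_cancel a v ha.1
  rw [List.isChain_append]
  refine ⟨ha.2, ?_, ?_⟩
  · cases v with
    | nil => simp
    | cons y v => exact List.isChain_singleton _
  · intro x hx y hy
    apply hjunc x hx
    cases v with
    | nil => simp at hy
    | cons z v => simpa using hy

theorem key : ∀ (n : ℕ) (U : List (G ⊕ H)) (L₁ L₂ : List (G × H)), U.length ≤ n → Red U →
    Admissible L₁ → Admissible L₂ →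
    rlist U (toL L₁) = rlist (toL L₂) U →
    ∃ u t : List (G × H), L₁ = u ++ t ∧ L₂ = t ++ u := by
  intro n
  induction n with
  | zero =>
    intro U L₁ L₂ hlen hU h1 h2 heq
    have hU0 : U = [] := List.eq_nil_of_length_eq_zero (Nat.le_zero.1 hlen)
    subst hU0
    rw [rlist_nil_left, rlist_nil_right (red_toL h2.2)] at heq
    exact ⟨L₁, [], by simp, by simp [toL_inj heq]⟩
  | succ n ih =>
    intro U L₁ L₂ hlen hU h1 h2 heq
    by_cases hsm : U.length ≤ n
    · exact ih U L₁ L₂ hsm hU h1 h2 heq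
    have hUlen : U.length = n + 1 := by omega
    obtain ⟨p₁, T, rfl⟩ : ∃ p T, L₁ = p :: T := by
      cases L₁ with
      | nil => exact absurd rfl h1.1
      | cons p T => exact ⟨p, T, rfl⟩
    obtain ⟨S, q, rfl⟩ : ∃ S q, L₂ = S ++ [q] := by
      rcases List.eq_nil_or_concat L₂ with rfl | ⟨S, q, hSq⟩
      · exact absurd rfl h2.1
      · exact ⟨S, q, by simpa using hSq⟩
    obtain ⟨U', ℓ, rfl⟩ : ∃ U' ℓ, U = U' ++ [ℓ] := by
      rcases List.eq_nil_or_concat U with rfl | ⟨U', ℓ, hc⟩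
      · simp at hUlen
      · exact ⟨U', ℓ, by simpa using hc⟩
    have hp₁ := h1.2 p₁ (List.mem_cons_self)
    have hqq := h2.2 q (by simp)
    have hA1 : Red (toL (p₁ :: T)) := red_toL h1.2
    have hA2 : Red (toL (S ++ [q])) := red_toL h2.2
    have hA2shape : toL (S ++ [q]) = (toL S ++ [Sum.inl q.1]) ++ [Sum.inr q.2] := by
      rw [toL_append]; simp
    have hA2last : (toL (S ++ [q])).getLast? = some (Sum.inr q.2) := by
      rw [hA2shape, List.getLast?_concat]
    have hA2S : Red (toL S ++ [Sum.inl q.1]) := red_of_append_left (hA2shape ▸ hA2)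
    have hxeq : toCoprod (U' ++ [ℓ]) * toCoprod (toL (p₁ :: T)) =
        toCoprod (toL (S ++ [q])) * toCoprod (U' ++ [ℓ]) := by
      have := congrArg toCoprod heq
      rwa [toCoprod_rlist, toCoprod_rlist] at this
    by_cases hcA : ∃ g : G, ℓ = Sum.inl g ∧ g * p₁.1 = 1
    · obtain ⟨g, rfl, hgc⟩ := hcA
      rcases List.eq_nil_or_concat U' with rfl | ⟨U'', w, hc⟩
      · -- base case: U = [inl g], heads differ
        exfalso
        simp only [List.nil_append] at heq
        have hL : rlist [Sum.inl g] (toL (p₁ :: T)) = Sum.inr p₁.2 :: toL T := by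
          rw [rlist_cons, rlist_nil_left, toL_cons, rcons_ll, if_pos hgc]
        have hR : rlist (toL (S ++ [q])) [Sum.inl g] = toL (S ++ [q]) ++ [Sum.inl g] := by
          apply rlist_clean hA2
          intro x hx y hy
          rw [hA2last] at hx
          simp only [Option.mem_some_iff, List.head?_cons] at hx hy
          subst hx; rw [← hy]; simp [opp]
        rw [hL, hR] at heq
        have h1' := congrArg List.head? heq
        rw [show toL (S ++ [q]) ++ [Sum.inl g] =
            toL S ++ Sum.inl q.1 :: [Sum.inr q.2, Sum.inl g] by rw [toL_append]; simp] at h1'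
        obtain ⟨gg, hgg⟩ := toL_concat_head S q.1 [Sum.inr q.2, Sum.inl g]
        rw [hgg] at h1'
        simp at h1'
      · -- recursive case A
        rw [List.concat_eq_append] at hc
        subst hc
        have hjw : opp w (Sum.inl g) := by
          have := chain'_junction (a := U'' ++ [w]) (b := [Sum.inl g]) hU.2
          exact this w (by rw [List.getLast?_concat]; rfl) (Sum.inl g) rfl
        obtain ⟨h', rfl⟩ : ∃ h', w = Sum.inr h' := by
          cases w with
          | inl gg => simp [opp] at hjw
          | inr h' => exact ⟨h', rfl⟩
        have hadm : Admissible (T ++ [p₁]) := by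
          refine ⟨by simp, fun p hp => h1.2 p ?_⟩
          rcases List.mem_append.1 hp with hp | hp
          · exact List.mem_cons_of_mem _ hp
          · simp at hp; subst hp; exact List.mem_cons_self
        have hBred : Red [Sum.inl p₁.1, Sum.inr p₁.2] := by
          have := red_toL (L := [p₁]) (by simpa using hp₁)
          simpa using this
        have hsplit : toCoprod (toL (p₁ :: T)) =
            toCoprod [Sum.inl p₁.1, Sum.inr p₁.2] * toCoprod (toL T) := by
          rw [show toL (p₁ :: T) = [Sum.inl p₁.1, Sum.inr p₁.2] ++ toL T from by simp,
            toCoprod_append]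
        have hsplit2 : toCoprod (toL (T ++ [p₁])) =
            toCoprod (toL T) * toCoprod [Sum.inl p₁.1, Sum.inr p₁.2] := by
          rw [toL_append, toCoprod_append]
          rfl
        set x := toCoprod ((U'' ++ [Sum.inr h']) ++ [Sum.inl g]) with hxdef
        set B := toCoprod ([Sum.inl p₁.1, Sum.inr p₁.2] : List (G ⊕ H)) with hBdef
        have hyeq : (x * B) * toCoprod (toL (T ++ [p₁])) =
            toCoprod (toL (S ++ [q])) * (x * B) := by
          rw [hsplit2]
          calc x * B * (toCoprod (toL T) * B)
              = x * (B * toCoprod (toL T)) * B := by simp [mul_assoc]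
            _ = x * toCoprod (toL (p₁ :: T)) * B := by rw [← hsplit]
            _ = toCoprod (toL (S ++ [q])) * (x * B) := by rw [hxeq, mul_assoc]
        have heq' := derive (red_toL hadm.2) hA2 hyeq
        have hnfy : nf (x * B) =
            rlist ((U'' ++ [Sum.inr h']) ++ [Sum.inl g]) [Sum.inl p₁.1, Sum.inr p₁.2] := by
          rw [hBdef, nf_mul_right x hBred, hxdef, nf_toCoprod hU]
        have hlen' : (nf (x * B)).length ≤ n := by
          rw [hnfy, rlist_append, rlist_append]
          have e1 : rlist [Sum.inl g] [Sum.inl p₁.1, Sum.inr p₁.2] = [Sum.inr p₁.2] := by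
            rw [rlist_cons, rlist_nil_left, rcons_ll, if_pos hgc]
          rw [e1]
          have e2 : (rlist [Sum.inr h'] ([Sum.inr p₁.2] : List (G ⊕ H))).length ≤ 1 := by
            rw [rlist_cons, rlist_nil_left, rcons_rr]; split <;> simp
          have e3 := length_rlist U'' (rlist [Sum.inr h'] ([Sum.inr p₁.2] : List (G ⊕ H)))
          have e4 : ((U'' ++ [Sum.inr h']) ++ [Sum.inl g]).length = n + 1 := hUlen
          simp only [List.length_append, List.length_cons, List.length_nil] at e3 e4 ⊢
          omega
        obtain ⟨u, t, hu, ht⟩ := ih (nf (x * B)) (T ++ [p₁]) (S ++ [q]) hlen'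
          (red_nf _) hadm h2 heq'
        have r1 : (p₁ :: T) ~r (T ++ [p₁]) := (rot_iff _ _).1 ⟨[p₁], T, rfl, rfl⟩
        have r2 : (T ++ [p₁]) ~r (S ++ [q]) := (rot_iff _ _).1 ⟨u, t, hu, ht⟩
        exact (rot_iff _ _).2 (r1.trans r2)
    by_cases hcB : ∃ hh : H, (U' ++ [ℓ]).head? = some (Sum.inr hh) ∧ q.2 * hh = 1
    · obtain ⟨hh, hhead, hhc⟩ := hcB
      obtain ⟨U₂, hU2⟩ : ∃ U₂, U' ++ [ℓ] = Sum.inr hh :: U₂ := by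
        rcases hcons : (U' ++ [ℓ]) with _ | ⟨a, b⟩
        · simp at hcons
        · rw [hcons] at hhead
          simp only [List.head?_cons, Option.some.injEq] at hhead
          subst hhead; exact ⟨b, rfl⟩
      rcases U₂ with _ | ⟨w, U₃⟩
      · -- base case: U = [inr hh]
        exfalso
        rw [hU2] at heq hU
        have hL : rlist [Sum.inr hh] (toL (p₁ :: T)) =
            Sum.inr hh :: toL (p₁ :: T) := by
          rw [rlist_cons, rlist_nil_left]
          apply rcons_head
          · exact hU.1 _ (List.mem_cons_self)
          · intro b hb
            rw [toL_cons] at hb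
            simp only [List.head?_cons, Option.mem_some_iff] at hb
            subst hb; simp [opp]
        have hR : rlist (toL (S ++ [q])) [Sum.inr hh] = toL S ++ [Sum.inl q.1] := by
          rw [hA2shape, rlist_append, rlist_cons, rlist_nil_left, rcons_rr, if_pos hhc,
            rlist_nil_right hA2S]
        rw [hL, hR] at heq
        have h1' := congrArg List.head? heq
        obtain ⟨gg, hgg⟩ := toL_concat_head S q.1 ([] : List (G ⊕ H))
        rw [show toL S ++ [Sum.inl q.1] = toL S ++ Sum.inl q.1 :: [] from by simp, hgg] at h1'
        simp at h1'
      · -- recursive case B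
        have hw : opp (Sum.inr hh) w := by
          have := hU.2
          rw [hU2, List.isChain_cons_cons] at this
          exact this.1
        obtain ⟨g₂, rfl⟩ : ∃ g₂, w = Sum.inl g₂ := by
          cases w with
          | inl g₂ => exact ⟨g₂, rfl⟩
          | inr h₂ => simp [opp] at hw
        have hadm2 : Admissible (q :: S) := by
          refine ⟨by simp, fun p hp => h2.2 p ?_⟩
          rcases List.mem_cons.1 hp with rfl | hp
          · simp
          · simp [hp]
        have hBred : Red [Sum.inl q.1, Sum.inr q.2] := by
          have := red_toL (L := [q]) (by simpa using hqq)
          simpa using this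
        have hsplitq : toCoprod (toL (q :: S)) =
            toCoprod [Sum.inl q.1, Sum.inr q.2] * toCoprod (toL S) := by
          rw [show toL (q :: S) = [Sum.inl q.1, Sum.inr q.2] ++ toL S from by simp,
            toCoprod_append]
        have hsplitq2 : toCoprod (toL (S ++ [q])) =
            toCoprod (toL S) * toCoprod [Sum.inl q.1, Sum.inr q.2] := by
          rw [toL_append, toCoprod_append]
          rfl
        set x := toCoprod (U' ++ [ℓ]) with hxdef
        set B := toCoprod ([Sum.inl q.1, Sum.inr q.2] : List (G ⊕ H)) with hBdef
        have hyeq : (B * x) * toCoprod (toL (p₁ :: T)) =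
            toCoprod (toL (q :: S)) * (B * x) := by
          rw [hsplitq]
          calc B * x * toCoprod (toL (p₁ :: T))
              = B * (x * toCoprod (toL (p₁ :: T))) := by rw [mul_assoc]
            _ = B * (toCoprod (toL (S ++ [q])) * x) := by rw [hxeq]
            _ = B * (toCoprod (toL S) * B * x) := by rw [← hsplitq2]
            _ = B * toCoprod (toL S) * (B * x) := by simp [mul_assoc]
        have heq' := derive hA1 (red_toL hadm2.2) hyeq
        have hnfy : nf (B * x) = rlist [Sum.inl q.1, Sum.inr q.2] (U' ++ [ℓ]) := by
          rw [hBdef, hxdef, nf_mul_left hBred, nf_toCoprod hU]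
        have hlen' : (nf (B * x)).length ≤ n := by
          rw [hnfy, hU2, rlist_cons, rlist_cons, rlist_nil_left, rcons_rr, if_pos hhc]
          have e4 : (U' ++ [ℓ]).length = n + 1 := hUlen
          rw [hU2] at e4
          simp only [List.length_cons] at e4
          have e2 : (rcons (Sum.inl q.1) (Sum.inl g₂ :: U₃)).length ≤ U₃.length + 1 := by
            rw [rcons_ll]; split <;> simp
          omega
        obtain ⟨u, t, hu, ht⟩ := ih (nf (B * x)) (p₁ :: T) (q :: S) hlen'
          (red_nf _) h1 hadm2 heq'
        have r1 : (p₁ :: T) ~r (q :: S) := (rot_iff _ _).1 ⟨u, t, hu, ht⟩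
        have r2 : (q :: S) ~r (S ++ [q]) := (rot_iff _ _).1 ⟨[q], S, rfl, rfl⟩
        exact (rot_iff _ _).2 (r1.trans r2)
    -- case C
    push_neg at hcA hcB
    cases ℓ with
    | inr h'' =>
      have hLHS : rlist (U' ++ [Sum.inr h'']) (toL (p₁ :: T)) =
          (U' ++ [Sum.inr h'']) ++ toL (p₁ :: T) := by
        apply rlist_clean hU
        intro xx hx y hy
        rw [List.getLast?_concat] at hx
        rw [toL_cons] at hy
        simp only [Option.mem_some_iff, List.head?_cons] at hx hy
        subst hx; subst hy; simp [opp]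
      cases U' with
      | nil =>
        exfalso
        have hne := hcB h'' (by simp)
        have hRHS : rlist (toL (S ++ [q])) ([] ++ [Sum.inr h'']) =
            (toL S ++ [Sum.inl q.1]) ++ [Sum.inr (q.2 * h'')] := by
          rw [List.nil_append, hA2shape, rlist_append, rlist_cons, rlist_nil_left, rcons_rr,
            if_neg hne]
          apply rlist_clean hA2S
          intro xx hx y hy
          rw [List.getLast?_concat] at hx
          simp only [Option.mem_some_iff, List.head?_cons] at hx hy
          subst hx; subst hy; simp [opp]
        rw [hLHS, hRHS] at heq
        have hlc := congrArg List.length heq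
        simp only [List.length_append, length_toL, List.length_cons, List.length_nil,
          List.nil_append] at hlc
        omega
      | cons f U'' =>
        cases f with
        | inl g₂ =>
          have hRHS : rlist (toL (S ++ [q])) ((Sum.inl g₂ :: U'') ++ [Sum.inr h'']) =
              toL (S ++ [q]) ++ ((Sum.inl g₂ :: U'') ++ [Sum.inr h'']) := by
            apply rlist_clean hA2
            intro xx hx y hy
            rw [hA2last] at hx
            simp only [Option.mem_some_iff, List.cons_append, List.head?_cons] at hx hy
            subst hx; subst hy; simp [opp]
          rw [hLHS, hRHS] at heq
          obtain ⟨s, t, hb, ha⟩ := conj_lists heq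
          rcases toL_split (S ++ [q]) s t hb with ⟨Ls, Lt, hL2, rfl, rfl⟩ |
            ⟨Ls, pp, Lt, hL2, rfl, rfl⟩
          · have hteq : p₁ :: T = Lt ++ Ls := toL_inj (by rw [ha, ← toL_append])
            exact ⟨Lt, Ls, hteq, hL2⟩
          · exfalso
            have h1' := congrArg List.head? ha
            rw [toL_cons] at h1'
            simp at h1'
        | inr h₂ =>
          exfalso
          have hne := hcB h₂ (by simp)
          have hRHS : rlist (toL (S ++ [q])) ((Sum.inr h₂ :: U'') ++ [Sum.inr h'']) =
              (toL S ++ [Sum.inl q.1]) ++ (Sum.inr (q.2 * h₂) :: (U'' ++ [Sum.inr h''])) := by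
            rw [hA2shape, rlist_append, show (Sum.inr h₂ :: U'') ++ [Sum.inr h''] =
              Sum.inr h₂ :: (U'' ++ [Sum.inr h'']) from rfl, rlist_cons, rlist_nil_left,
              rcons_rr, if_neg hne]
            apply rlist_clean hA2S
            intro xx hx y hy
            rw [List.getLast?_concat] at hx
            simp only [Option.mem_some_iff, List.head?_cons] at hx hy
            subst hx; subst hy; simp [opp]
          rw [hLHS, hRHS] at heq
          have hlc := congrArg List.length heq
          simp only [List.length_append, length_toL, List.length_cons, List.length_nil,
            List.cons_append] at hlc
          omega
    | inl g'' =>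
      have hne1 := hcA g'' rfl
      have hredU' : Red U' := red_of_append_left hU
      have hLHS : rlist (U' ++ [Sum.inl g'']) (toL (p₁ :: T)) =
          U' ++ (Sum.inl (g'' * p₁.1) :: Sum.inr p₁.2 :: toL T) := by
        rw [rlist_append, rlist_cons, rlist_nil_left, toL_cons, rcons_ll, if_neg hne1]
        apply rlist_clean hredU'
        intro xx hx y hy
        have hj := chain'_junction (a := U') (b := [Sum.inl g'']) hU.2 xx hx (Sum.inl g'') rfl
        simp only [List.head?_cons, Option.mem_some_iff] at hy
        subst hy
        simpa [opp] using hj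
      cases U' with
      | nil =>
        exfalso
        have hRHS : rlist (toL (S ++ [q])) ([] ++ [Sum.inl g'']) =
            toL (S ++ [q]) ++ [Sum.inl g''] := by
          apply rlist_clean hA2
          intro xx hx y hy
          rw [hA2last] at hx
          simp only [Option.mem_some_iff, List.nil_append, List.head?_cons] at hx hy
          subst hx; subst hy; simp [opp]
        rw [hLHS, hRHS] at heq
        have hlc := congrArg List.length heq
        simp only [List.length_append, length_toL, List.length_cons, List.length_nil,
          List.nil_append] at hlc
        omega
      | cons f U'' =>
        cases f with
        | inl g₂ =>
          exfalso
          have hRHS : rlist (toL (S ++ [q])) ((Sum.inl g₂ :: U'') ++ [Sum.inl g'']) =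
              toL (S ++ [q]) ++ ((Sum.inl g₂ :: U'') ++ [Sum.inl g'']) := by
            apply rlist_clean hA2
            intro xx hx y hy
            rw [hA2last] at hx
            simp only [Option.mem_some_iff, List.cons_append, List.head?_cons] at hx hy
            subst hx; subst hy; simp [opp]
          rw [hLHS, hRHS] at heq
          have hlc := congrArg List.length heq
          simp only [List.length_append, length_toL, List.length_cons, List.length_nil,
            List.cons_append] at hlc
          omega
        | inr h₂ =>
          exfalso
          have hne := hcB h₂ (by simp)
          have hRHS : rlist (toL (S ++ [q])) ((Sum.inr h₂ :: U'') ++ [Sum.inl g'']) =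
              (toL S ++ [Sum.inl q.1]) ++ (Sum.inr (q.2 * h₂) :: (U'' ++ [Sum.inl g''])) := by
            rw [hA2shape, rlist_append, show (Sum.inr h₂ :: U'') ++ [Sum.inl g''] =
              Sum.inr h₂ :: (U'' ++ [Sum.inl g'']) from rfl, rlist_cons, rlist_nil_left,
              rcons_rr, if_neg hne]
            apply rlist_clean hA2S
            intro xx hx y hy
            rw [List.getLast?_concat] at hx
            simp only [Option.mem_some_iff, List.head?_cons] at hx hy
            subst hx; subst hy; simp [opp]
          rw [hLHS, hRHS] at heq
          have h1' := congrArg List.head? heq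
          rw [show (toL S ++ [Sum.inl q.1]) ++ (Sum.inr (q.2 * h₂) :: (U'' ++ [Sum.inl g''])) =
            toL S ++ Sum.inl q.1 :: (Sum.inr (q.2 * h₂) :: (U'' ++ [Sum.inl g''])) from by
              simp] at h1'
          obtain ⟨gg, hgg⟩ := toL_concat_head S q.1 (Sum.inr (q.2 * h₂) :: (U'' ++ [Sum.inl g'']))
          rw [hgg] at h1'
          simp at h1'

lemma altElem_append (u t : List (G × H)) :
    _root_.altElem (u ++ t) = _root_.altElem u * _root_.altElem t := by
  simp [_root_.altElem]

end FPC

/-- The alternating elements of two admissible lists are conjugate in `G ∗ H`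
iff one list is a cyclic rotation of the other. -/
theorem isConj_altElem_iff_cyclic_rotation {G H : Type*} [Group G] [Group H]
    (L₁ L₂ : List (G × H)) (h₁ : Admissible L₁) (h₂ : Admissible L₂) :
    IsConj (altElem L₁) (altElem L₂) ↔
      ∃ u t : List (G × H), L₁ = u ++ t ∧ L₂ = t ++ u := by
  constructor
  · intro h
    obtain ⟨c, hc⟩ := isConj_iff.1 h
    have hc' : c * altElem L₁ = altElem L₂ * c := by
      rw [← hc]; group
    rw [FPC.altElem_eq, FPC.altElem_eq] at hc'
    have heq := FPC.derive (FPC.red_toL h₁.2) (FPC.red_toL h₂.2) hc'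
    exact FPC.key (FPC.nf c).length (FPC.nf c) L₁ L₂ le_rfl (FPC.red_nf c) h₁ h₂ heq
  · rintro ⟨u, t, rfl, rfl⟩
    rw [FPC.altElem_append, FPC.altElem_append]
    exact isConj_iff.2 ⟨(altElem u)⁻¹, by group⟩
end

section
/- Let G and H be groups. (i) For g ∈ G with g ≠ 1 and h ∈ H with h ≠ 1, the elements inl g and inr h are not conjugate in the free product G ∗ H. (ii) For any admissible list L of pairs in G × H, the alternating element c(L) is not conjugate in G ∗ H to inl g for any g ∈ G, nor to inr h for any h ∈ H. (This shows the four families of conjugacy classes of G ∗ H listed in Example 5.1 are pairwise disjoint.) -/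
open Monoid
open scoped Monoid.Coprod

section AuxCoprodI

open Monoid.CoprodI

variable {ι : Type*} {M : ι → Type*} [∀ i, Group (M i)]

/-- Product of a list of letters in a free product. -/
def pl (l : List (Σ i, M i)) : CoprodI M := (l.map fun x => CoprodI.of x.2).prod

theorem pl_nil : pl ([] : List (Σ i, M i)) = 1 := rfl

theorem pl_cons (x : Σ i, M i) (l : List (Σ i, M i)) :
    pl (x :: l) = CoprodI.of x.2 * pl l := by simp [pl]

theorem pl_append (l₁ l₂ : List (Σ i, M i)) : pl (l₁ ++ l₂) = pl l₁ * pl l₂ := by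
  simp [pl]

/-- The reversed, letterwise-inverted list. -/
def invRev (l : List (Σ i, M i)) : List (Σ i, M i) :=
  l.reverse.map fun x => ⟨x.1, x.2⁻¹⟩

theorem invRev_nil : invRev ([] : List (Σ i, M i)) = [] := rfl

theorem invRev_cons (x : Σ i, M i) (l : List (Σ i, M i)) :
    invRev (x :: l) = invRev l ++ [⟨x.1, x.2⁻¹⟩] := by simp [invRev]

/-- `pl` is injective on reduced lists. -/
theorem pl_injective (l₁ l₂ : List (Σ i, M i))
    (h₁ : ∀ x ∈ l₁, x.2 ≠ 1) (c₁ : l₁.Chain' fun a b => a.1 ≠ b.1)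
    (h₂ : ∀ x ∈ l₂, x.2 ≠ 1) (c₂ : l₂.Chain' fun a b => a.1 ≠ b.1)
    (h : pl l₁ = pl l₂) : l₁ = l₂ := by
  classical
  have : Word.prod (⟨l₁, h₁, c₁⟩ : Word M) = Word.prod (⟨l₂, h₂, c₂⟩ : Word M) := h
  have := (Word.equiv (M := M)).symm.injective this
  exact congrArg Word.toList this

/-- The shape of elements conjugate to an element of a factor. -/
def Shape (y : CoprodI M) : Prop :=
  y = 1 ∨ ∃ (s : List (Σ i, M i)) (k : ι) (m : M k),
    (∀ x ∈ s, x.2 ≠ 1) ∧ m ≠ 1 ∧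
    List.Chain' (fun a b => a.1 ≠ b.1) (s ++ [⟨k, m⟩]) ∧
    y = pl (s ++ ⟨k, m⟩ :: invRev s)

theorem shape_of (i : ι) (m : M i) : Shape (CoprodI.of m : CoprodI M) := by
  by_cases hm : m = 1
  · left; simp [hm]
  · right
    exact ⟨[], i, m, by simp, hm, List.isChain_singleton _, by simp [pl, invRev]⟩

theorem shape_conj (j : ι) (a : M j) (y : CoprodI M) (hy : Shape y) :
    Shape (CoprodI.of a * y * (CoprodI.of a)⁻¹) := by
  by_cases ha : a = 1
  · simpa [ha] using hy
  rcases hy with rfl | ⟨s, k, m, hne, hm, hch, rfl⟩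
  · left; simp
  cases s with
  | nil =>
    by_cases hjk : j = k
    · subst hjk
      right
      refine ⟨[], j, a * m * a⁻¹, by simp, by simp [conj_eq_one_iff, hm], List.isChain_singleton _, ?_⟩
      simp [pl, invRev, mul_assoc]
    · right
      refine ⟨[⟨j, a⟩], k, m, by simp [ha], hm, ?_, ?_⟩
      · exact List.isChain_cons_cons.2 ⟨hjk, List.isChain_singleton _⟩
      · simp only [invRev_cons, invRev_nil, List.nil_append, List.cons_append, pl_cons, pl_append,
          pl_nil, List.singleton_append, map_inv]
        group
  | cons x s' =>
    obtain ⟨j₀, b⟩ := x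
    by_cases hj : j = j₀
    · subst hj
      by_cases hab : a * b = 1
      · right
        have hb : b = a⁻¹ := eq_inv_of_mul_eq_one_right hab
        refine ⟨s', k, m, fun x hx => hne x (List.mem_cons_of_mem _ hx), hm, ?_, ?_⟩
        · have := hch
          rw [List.cons_append, List.Chain', List.isChain_cons] at this
          exact this.2
        · subst hb
          simp only [invRev_cons, pl_cons, pl_append, pl_nil, List.cons_append, map_inv,
            List.append_assoc, List.singleton_append]
          group
      · right
        refine ⟨⟨j, a * b⟩ :: s', k, m, ?_, hm, ?_, ?_⟩
        · intro x hx
          rw [List.mem_cons] at hx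
          rcases hx with rfl | hx
          · exact hab
          · exact hne _ (List.mem_cons_of_mem _ hx)
        · rw [List.cons_append, List.Chain', List.isChain_cons] at hch ⊢
          exact ⟨hch.1, hch.2⟩
        · simp only [invRev_cons, pl_cons, pl_append, pl_nil, List.cons_append, map_inv, map_mul,
            List.append_assoc, List.singleton_append]
          group
    · right
      refine ⟨⟨j, a⟩ :: ⟨j₀, b⟩ :: s', k, m, ?_, hm, ?_, ?_⟩
      · intro x hx
        rw [List.mem_cons] at hx
        rcases hx with rfl | hx
        · exact ha
        · exact hne _ hx
      · rw [List.cons_append, List.Chain', List.isChain_cons]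
        refine ⟨fun y hy => ?_, hch⟩
        simp only [List.cons_append, List.head?_cons, Option.mem_def, Option.some.injEq] at hy
        rw [← hy]
        exact hj
      · simp only [invRev_cons, pl_cons, pl_append, pl_nil, List.cons_append, map_inv,
          List.append_assoc, List.singleton_append]
        group

theorem shape_conj_all (u : CoprodI M) (i : ι) (m : M i) :
    Shape (u * CoprodI.of m * u⁻¹) := by
  induction u using CoprodI.induction_left with
  | one => simpa using shape_of i m
  | mul a x ih =>
    have h2 := shape_conj _ a _ ih
    have : CoprodI.of a * (x * CoprodI.of m * x⁻¹) * (CoprodI.of a)⁻¹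
        = (CoprodI.of a * x) * CoprodI.of m * (CoprodI.of a * x)⁻¹ := by group
    rwa [this] at h2

/-- A shape list is reduced: all letters nontrivial. -/
theorem shape_ne_one {s : List (Σ i, M i)} {k : ι} {m : M k}
    (hne : ∀ x ∈ s, x.2 ≠ 1) (hm : m ≠ 1) :
    ∀ x ∈ s ++ ⟨k, m⟩ :: invRev s, x.2 ≠ 1 := by
  intro x hx
  rcases List.mem_append.1 hx with hx | hx
  · exact hne x hx
  rcases List.mem_cons.1 hx with rfl | hx
  · exact hm
  · simp only [invRev, List.mem_map, List.mem_reverse] at hx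
    obtain ⟨y, hy, rfl⟩ := hx
    exact inv_ne_one.2 (hne y hy)

/-- A shape list is reduced: adjacent letters from distinct factors. -/
theorem shape_chain' {s : List (Σ i, M i)} {k : ι} {m : M k}
    (hch : List.Chain' (fun a b => a.1 ≠ b.1) (s ++ [⟨k, m⟩])) :
    List.Chain' (fun a b => a.1 ≠ b.1) (s ++ ⟨k, m⟩ :: invRev s) := by
  have hs : List.Chain' (fun (a b : Σ i, M i) => a.1 ≠ b.1) s :=
    (List.isChain_append.1 hch).1
  have hinv : List.Chain' (fun (a b : Σ i, M i) => a.1 ≠ b.1) (invRev s) := by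
    unfold invRev
    rw [List.Chain', List.isChain_map, List.isChain_reverse]
    exact hs.imp fun a b h => Ne.symm h
  have hlast : ∀ x ∈ s.getLast?, x.1 ≠ k := by
    have := (List.isChain_append.1 hch).2.2
    intro x hx
    exact this x hx ⟨k, m⟩ rfl
  rw [show s ++ ⟨k, m⟩ :: invRev s = (s ++ [⟨k, m⟩]) ++ invRev s by
    simp [List.append_assoc]]
  rw [List.Chain', List.isChain_append]
  refine ⟨hch, hinv, ?_⟩
  intro x hx y hy
  rw [List.getLast?_concat] at hx
  obtain rfl : (⟨k, m⟩ : Σ i, M i) = x := by simpa using hx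
  simp only [invRev, List.head?_map, List.head?_reverse, Option.mem_def, Option.map_eq_some_iff] at hy
  obtain ⟨z, hz, rfl⟩ := hy
  exact fun h => hlast z hz h.symm

end AuxCoprodI

section Concrete

universe u v
variable {G : Type u} {H : Type v} [Group G] [Group H]

/-- The two factors, packaged as a `Bool`-indexed family in one universe. -/
abbrev Fac (G : Type u) (H : Type v) : Bool → Type (max u v) :=
  fun b => cond b (ULift.{v} G) (ULift.{u} H)

instance facGroup : ∀ b, Group (Fac G H b)
  | true => inferInstanceAs (Group (ULift G))
  | false => inferInstanceAs (Group (ULift H))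

/-- The canonical map from the binary coproduct to the indexed coproduct. -/
noncomputable def phi : G ∗ H →* Monoid.CoprodI (Fac G H) :=
  Coprod.lift
    ((Monoid.CoprodI.of (i := true)).comp (MulEquiv.ulift.symm : G ≃* ULift G).toMonoidHom)
    ((Monoid.CoprodI.of (i := false)).comp (MulEquiv.ulift.symm : H ≃* ULift H).toMonoidHom)

theorem phi_inl (g : G) :
    phi (Coprod.inl g : G ∗ H) = Monoid.CoprodI.of (i := true) (ULift.up g) := by
  simp [phi]; rfl

theorem phi_inr (h : H) :
    phi (Coprod.inr h : G ∗ H) = Monoid.CoprodI.of (i := false) (ULift.up h) := by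
  simp [phi]; rfl

/-- The alternating letter list associated to a list of pairs. -/
def altL (L : List (G × H)) : List (Σ b, Fac G H b) :=
  L.flatMap fun p => [⟨true, ULift.up p.1⟩, ⟨false, ULift.up p.2⟩]

theorem altL_nil : altL ([] : List (G × H)) = [] := rfl

theorem altL_cons (p : G × H) (L : List (G × H)) :
    altL (p :: L) = ⟨true, ULift.up p.1⟩ :: ⟨false, ULift.up p.2⟩ :: altL L := rfl

theorem altL_head_fst (L : List (G × H)) : ∀ x ∈ (altL L).head?, x.1 = true := by
  cases L with
  | nil => simp [altL_nil]
  | cons p L => simp [altL_cons]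

theorem altL_getLast_fst : ∀ (L : List (G × H)), ∀ x ∈ (altL L).getLast?, x.1 = false := by
  intro L
  induction L with
  | nil => simp [altL_nil]
  | cons p L ih =>
    cases L with
    | nil => simp [altL_cons, altL_nil]
    | cons q L' =>
      rw [altL_cons, altL_cons, List.getLast?_cons_cons, List.getLast?_cons_cons, ← altL_cons]
      exact ih

theorem altL_chain' (L : List (G × H)) :
    List.Chain' (fun a b => a.1 ≠ b.1) (altL L) := by
  induction L with
  | nil => simp [altL_nil, List.Chain']
  | cons p L ih =>
    rw [altL_cons, List.Chain', List.isChain_cons, List.isChain_cons]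
    refine ⟨by simp, ⟨?_, ih⟩⟩
    intro y hy
    have := altL_head_fst L y hy
    simp [this]

theorem altL_ne_one {L : List (G × H)} (hL : ∀ p ∈ L, p.1 ≠ 1 ∧ p.2 ≠ 1) :
    ∀ x ∈ altL L, x.2 ≠ 1 := by
  induction L with
  | nil => simp [altL_nil]
  | cons p L ih =>
    intro x hx
    rw [altL_cons, List.mem_cons, List.mem_cons] at hx
    rcases hx with rfl | rfl | hx
    · exact fun h => (hL p List.mem_cons_self).1 (congrArg ULift.down h)
    · exact fun h => (hL p List.mem_cons_self).2 (congrArg ULift.down h)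
    · exact ih (fun q hq => hL q (List.mem_cons_of_mem _ hq)) x hx

theorem phi_altElem (L : List (G × H)) : phi (altElem L) = pl (altL L) := by
  induction L with
  | nil => simp [altElem, altL_nil, pl_nil]
  | cons p L ih =>
    have : altElem (p :: L) = Coprod.inl p.1 * Coprod.inr p.2 * altElem L := by
      simp [altElem, mul_assoc]
    rw [this, map_mul, map_mul, ih, phi_inl, phi_inr, altL_cons, pl_cons, pl_cons, mul_assoc]

/-- Key lemma: the image of an admissible alternating element is not conjugate
to any single letter in the indexed coproduct. -/
theorem main_lemma {L : List (G × H)} (hL : Admissible L)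
    (u : Monoid.CoprodI (Fac G H)) (i : Bool) (m : Fac G H i) :
    phi (altElem L) ≠ u * Monoid.CoprodI.of m * u⁻¹ := by
  intro heq
  have hs := shape_conj_all u i m
  rw [← heq, phi_altElem] at hs
  obtain ⟨p, L', rfl⟩ : ∃ p L', L = p :: L' := by
    cases L with
    | nil => exact absurd rfl hL.1
    | cons p L' => exact ⟨p, L', rfl⟩
  rcases hs with h1 | ⟨s, k, m', hne, hm', hch, hpl⟩
  · have : altL (p :: L') = [] :=
      pl_injective _ _ (altL_ne_one hL.2) (altL_chain' _) (by simp) (by simp [List.Chain'])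
        (by rw [h1]; rfl)
    simp [altL_cons] at this
  · have hlists : altL (p :: L') = s ++ ⟨k, m'⟩ :: invRev s :=
      pl_injective _ _ (altL_ne_one hL.2) (altL_chain' _)
        (shape_ne_one hne hm') (shape_chain' hch) hpl
  -- compare head and last
    cases s with
    | nil =>
      rw [invRev_nil, altL_cons] at hlists
      simp at hlists
    | cons x s' =>
      have hhead : x.1 = true := by
        have := altL_head_fst (p :: L') x
        rw [hlists] at this
        simpa using this
      have hlast : x.1 = false := by
        have h2 : ((x :: s') ++ ⟨k, m'⟩ :: invRev (x :: s')).getLast?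
            = some ⟨x.1, x.2⁻¹⟩ := by
          rw [show (x :: s') ++ ⟨k, m'⟩ :: invRev (x :: s')
              = ((x :: s') ++ ⟨k, m'⟩ :: invRev s') ++ [⟨x.1, x.2⁻¹⟩] by
            rw [invRev_cons]; simp [List.append_assoc]]
          exact List.getLast?_concat
        have := altL_getLast_fst (p :: L') ⟨x.1, x.2⁻¹⟩
        rw [hlists, h2] at this
        simpa using this
      rw [hhead] at hlast
      exact Bool.noConfusion hlast

end Concrete

/-- The families of conjugacy classes of `G ∗ H` are pairwise disjoint:
(i) for `g ≠ 1` and `h ≠ 1`, `inl g` and `inr h` are not conjugate;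
(ii) the alternating element of an admissible list is conjugate neither to
`inl g` for any `g` nor to `inr h` for any `h`. -/
theorem conj_classes_disjoint {G H : Type*} [Group G] [Group H] :
    (∀ (g : G) (h : H), g ≠ 1 → h ≠ 1 →
      ¬ IsConj (Coprod.inl g : G ∗ H) (Coprod.inr h : G ∗ H)) ∧
    (∀ L : List (G × H), Admissible L →
      (∀ g : G, ¬ IsConj (altElem L) (Coprod.inl g : G ∗ H)) ∧
      (∀ h : H, ¬ IsConj (altElem L) (Coprod.inr h : G ∗ H))) := by
  constructor
  · intro g h hg _ hc
    obtain ⟨c, hc⟩ := isConj_iff.1 hc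
    have := congrArg Coprod.fst hc
    simp only [map_mul, map_inv, Coprod.fst_apply_inl, Coprod.fst_apply_inr] at this
    exact hg (conj_eq_one_iff.1 this)
  · intro L hL
    constructor
    · intro g hc
      obtain ⟨c, hc⟩ := isConj_iff.1 hc.symm
      have := congrArg phi hc
      simp only [map_mul, map_inv, phi_inl] at this
      exact main_lemma hL (phi c) true (ULift.up g) this.symm
    · intro h hc
      obtain ⟨c, hc⟩ := isConj_iff.1 hc.symm
      have := congrArg phi hc
      simp only [map_mul, map_inv, phi_inr] at this
      exact main_lemma hL (phi c) false (ULift.up h) this.symm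
end
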